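/- arXiv:1308.4296 — 4 statements merged into one kernel-verified Lean document; each statement's English description precedes it below -/
import Mathlib

section
/- Let e = 2 and λ = (a, 1^b) be a hook partition of n = a + b with b even and n odd. The number of standard λ-tableaux whose residue sequence equals that of the initial tableau T_λ equals the number of ways to choose which of the (n−1)/2 dominoes [2i, 2i+1] (i = 1,…,(n−1)/2) lie in the leg, namely the binomial coefficient C((n−1)/2, b/2). -/
/-- The rank of `k` in the leg set `L`: the number of leg entries `≤ k`. -/
def legRank (L : Finset ℕ) (k : ℕ) : ℕ := (L.filter (· ≤ k)).card

/-- The residue (at `e = 2`) of the node occupied by `k` in the standard hook tableau whose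
set of leg entries (other than the corner entry `1`) is `L`. -/
def resT (L : Finset ℕ) (k : ℕ) : ZMod 2 :=
  if k ∈ L then (legRank L k : ZMod 2) else ((k + 1 + legRank L k : ℕ) : ZMod 2)

/-!
A tableau with the residue sequence of the column-initial tableau is fixed by its set `L` of leg
entries. Along the leg and along the arm residues alternate, so the residue of the node holding
`k` is governed by the parity of the number of leg entries `≤ k`. Comparing `k = 2i` with
`k = 2i + 1` forces `2i ∈ L ↔ 2i + 1 ∈ L`, i.e. `L` is a union of dominoes `{2i, 2i + 1}`;
conversely every union of dominoes has the right residues. For `n = 2m + 1` and `b = 2c` the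
tableaux therefore correspond to the `c`-subsets of `{1, …, m}`.
-/

open Finset

lemma legRank_zero (L : Finset ℕ) : legRank L 0 = if 0 ∈ L then 1 else 0 := by
  rw [legRank, filter_congr (q := (· = 0)) (fun x _ => Nat.le_zero), filter_eq']
  split_ifs <;> rfl

lemma legRank_succ (L : Finset ℕ) (k : ℕ) :
    legRank L (k + 1) = legRank L k + if k + 1 ∈ L then 1 else 0 := by
  have hsplit : L.filter (· ≤ k + 1) = L.filter (· ≤ k) ∪ L.filter (· = k + 1) := by
    ext x; simp only [mem_filter, mem_union, ← and_or_left, Nat.le_succ_iff]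
  rw [legRank, hsplit, card_union_of_disjoint (disjoint_filter.2 fun _ _ _ => by omega),
    filter_eq']
  split_ifs <;> rfl

lemma resT_eq_iff (L : Finset ℕ) (k : ℕ) :
    resT L k = ((k + 1 : ℕ) : ZMod 2) ↔
      legRank L k % 2 = if k ∈ L then (k + 1) % 2 else 0 := by
  unfold resT
  split_ifs
  · exact ZMod.natCast_eq_natCast_iff' _ _ _
  · rw [ZMod.natCast_eq_natCast_iff']; omega

lemma two_mul_mem_iff_of_resT_eq {L : Finset ℕ} {i : ℕ}
    (h₀ : resT L (2 * i) = ((2 * i + 1 : ℕ) : ZMod 2))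
    (h₁ : resT L (2 * i + 1) = ((2 * i + 1 + 1 : ℕ) : ZMod 2)) :
    2 * i ∈ L ↔ 2 * i + 1 ∈ L := by
  -- `legRank L (2 * i + 1)` must be even, while `legRank L (2 * i)` is odd iff `2 * i ∈ L`
  rw [resT_eq_iff] at h₀ h₁
  have hstep := legRank_succ L (2 * i)
  split_ifs at h₀ h₁ hstep <;> first | tauto | (exfalso; omega)

def dominoes (S : Finset ℕ) : Finset ℕ := S.biUnion fun i => {2 * i, 2 * i + 1}

lemma mem_dominoes {S : Finset ℕ} {x : ℕ} : x ∈ dominoes S ↔ x / 2 ∈ S := by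
  simp only [dominoes, mem_biUnion, mem_insert, mem_singleton]
  constructor
  · rintro ⟨i, hi, rfl | rfl⟩ <;> simpa [Nat.add_div] using hi
  · exact fun h => ⟨x / 2, h, by omega⟩

lemma card_dominoes (S : Finset ℕ) : #(dominoes S) = 2 * #S := by
  have hdisj : (S : Set ℕ).PairwiseDisjoint fun i => ({2 * i, 2 * i + 1} : Finset ℕ) :=
    fun i _ j _ hij => disjoint_left.2 fun x => by simp only [mem_insert, mem_singleton]; omega
  rw [dominoes, card_biUnion hdisj]
  simp [mul_comm]

lemma dominoes_injective : Function.Injective dominoes := by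
  intro S T h
  ext i
  simpa [mem_dominoes] using congrArg (2 * i ∈ ·) h

lemma dominoes_image_div_two {L : Finset ℕ} (hL : ∀ i, 2 * i ∈ L ↔ 2 * i + 1 ∈ L) :
    dominoes (L.image (· / 2)) = L := by
  ext x
  simp only [mem_dominoes, mem_image]
  refine ⟨fun ⟨y, hy, hxy⟩ => ?_, fun hx => ⟨x, hx, rfl⟩⟩
  have h := hL (x / 2)
  have hx : x = 2 * (x / 2) ∨ x = 2 * (x / 2) + 1 := by omega
  have hy' : y = 2 * (x / 2) ∨ y = 2 * (x / 2) + 1 := by omega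
  rcases hx with hx | hx <;> rcases hy' with hy' | hy' <;> rw [hx] <;> rw [hy'] at hy <;> tauto

lemma dominoes_subset_Icc_iff {S : Finset ℕ} {m : ℕ} :
    dominoes S ⊆ Icc 2 (2 * m + 1) ↔ S ⊆ Icc 1 m := by
  constructor
  · intro h i hi
    have := h (mem_dominoes.2 (by simpa using hi) : 2 * i ∈ dominoes S)
    simp only [mem_Icc] at this ⊢; omega
  · intro h x hx
    have := h (mem_dominoes.1 hx)
    simp only [mem_Icc] at this ⊢; omega

lemma resT_dominoes (S : Finset ℕ) (k : ℕ) : resT (dominoes S) k = ((k + 1 : ℕ) : ZMod 2) := by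
  rw [resT_eq_iff]
  induction k with
  | zero => rw [legRank_zero]; split_ifs <;> rfl
  | succ k ih =>
    rw [legRank_succ]
    obtain ⟨i, rfl | rfl⟩ : ∃ i, k = 2 * i ∨ k = 2 * i + 1 := ⟨k / 2, by omega⟩
    · simp only [mem_dominoes, show (2 * i + 1) / 2 = i by omega,
        show 2 * i / 2 = i by omega] at ih ⊢
      split_ifs at ih ⊢ <;> omega
    · simp only [mem_dominoes, show (2 * i + 1 + 1) / 2 = i + 1 by omega,
        show (2 * i + 1) / 2 = i by omega] at ih ⊢
      split_ifs at ih ⊢ <;> omega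

open Classical in
lemma filter_resT_eq_image_dominoes (m c : ℕ) :
    ((Icc 2 (2 * m + 1)).powersetCard (2 * c)).filter
        (fun L => ∀ k ∈ Icc 1 (2 * m + 1), resT L k = ((k + 1 : ℕ) : ZMod 2)) =
      ((Icc 1 m).powersetCard c).image dominoes := by
  ext L
  simp only [mem_filter, mem_powersetCard, mem_image]
  constructor
  · rintro ⟨⟨hsub, hcard⟩, hres⟩
    have hpair : ∀ i, 2 * i ∈ L ↔ 2 * i + 1 ∈ L := by
      intro i
      by_cases hi : 1 ≤ i ∧ i ≤ m
      · exact two_mul_mem_iff_of_resT_eq (hres _ (by simp only [mem_Icc]; omega))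
          (hres _ (by simp only [mem_Icc]; omega))
      · have not_mem : ∀ x, x / 2 = i → x ∉ L := fun x hx hxL => by
          have := hsub hxL; simp only [mem_Icc] at this; omega
        exact iff_of_false (not_mem _ (by omega)) (not_mem _ (by omega))
    refine ⟨L.image (· / 2), ⟨?_, ?_⟩, dominoes_image_div_two hpair⟩
    · rwa [← dominoes_subset_Icc_iff, dominoes_image_div_two hpair]
    · have := card_dominoes (L.image (· / 2))
      rw [dominoes_image_div_two hpair] at this
      omega
  · rintro ⟨S, ⟨hsub, hcard⟩, rfl⟩
    exact ⟨⟨dominoes_subset_Icc_iff.2 hsub, by rw [card_dominoes, hcard]⟩,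
      fun k _ => resT_dominoes S k⟩

open Classical in
theorem card_domino_tableaux_hook_general (n b : ℕ) (hb : Even b)
    (hodd : Odd n) :
    (((Finset.Icc 2 n).powersetCard b).filter
        (fun L => ∀ k ∈ Finset.Icc 1 n, resT L k = ((k + 1 : ℕ) : ZMod 2))).card =
      Nat.choose ((n - 1) / 2) (b / 2) := by
  obtain ⟨m, rfl⟩ := hodd
  obtain ⟨c, rfl⟩ := hb.two_dvd
  rw [filter_resT_eq_image_dominoes, card_image_of_injective _ dominoes_injective,
    card_powersetCard, Nat.card_Icc]
  simp

open Classical in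
/-- for `e = 2`, `λ = (a, 1^b)` a hook partition of `n = a + b` with `b` even
and `n` odd, the number of standard `λ`-tableaux (encoded by their `b`-element sets of leg
entries `L ⊆ {2, …, n}`) whose residue sequence equals that of the initial tableau is
`C((n-1)/2, b/2)`. -/
theorem card_domino_tableaux_hook (n a b : ℕ) (hn : n = a + b) (ha : 1 ≤ a) (hb : Even b)
    (hodd : Odd n) :
    (((Finset.Icc 2 n).powersetCard b).filter
        (fun L => ∀ k ∈ Finset.Icc 1 n, resT L k = ((k + 1 : ℕ) : ZMod 2))).card =
      Nat.choose ((n - 1) / 2) (b / 2) :=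
  card_domino_tableaux_hook_general n b hb hodd
end

section
/- Let e = 2, λ = (a,1^b) with a and b both even (so n = a+b even). Then every endomorphism of the Specht module S_λ of the Hecke algebra H_{F,q}(S_n) at q = −1 is a scalar multiple of the identity; in particular End(S_λ) is one-dimensional and S_λ is indecomposable. -/
open scoped BigOperators

def swapSeq (r : ℕ) (i : ℕ → ZMod 2) : ℕ → ZMod 2 :=
  fun k => if k = r then i (r + 1) else if k = r + 1 then i r else i k

/-- The KLR (quiver Hecke) algebra relations of type `A₁⁽¹⁾` (quantum characteristic `e = 2`)
on `n` strands, with generators `y 1, …, y n`, `ψ 1, …, ψ (n-1)` and idempotents `e i`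
indexed by residue sequences `i : ℕ → ZMod 2` (positions `1, …, n` are the relevant ones). -/
structure KLR (A : Type*) [Ring A] (n : ℕ) where
  y : ℕ → A
  ψ : ℕ → A
  e : (ℕ → ZMod 2) → A
  e_idem : ∀ i, e i * e i = e i
  e_orth : ∀ i j, i ≠ j → e i * e j = 0
  y_e : ∀ r i, 1 ≤ r → r ≤ n → y r * e i = e i * y r
  psi_e : ∀ r i, 1 ≤ r → r + 1 ≤ n → ψ r * e i = e (swapSeq r i) * ψ r
  y_comm : ∀ r s, 1 ≤ r → r ≤ n → 1 ≤ s → s ≤ n → y r * y s = y s * y r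
  y_psi_comm : ∀ r s, 1 ≤ r → r + 1 ≤ n → 1 ≤ s → s ≤ n → s ≠ r → s ≠ r + 1 →
    y s * ψ r = ψ r * y s
  y_psi_same : ∀ r i, 1 ≤ r → r + 1 ≤ n → i r = i (r + 1) →
    y r * ψ r * e i = (ψ r * y (r + 1) - 1) * e i
  y_psi_diff : ∀ r i, 1 ≤ r → r + 1 ≤ n → i r ≠ i (r + 1) →
    y r * ψ r * e i = ψ r * y (r + 1) * e i
  y_psi_same' : ∀ r i, 1 ≤ r → r + 1 ≤ n → i r = i (r + 1) →
    y (r + 1) * ψ r * e i = (ψ r * y r + 1) * e i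
  y_psi_diff' : ∀ r i, 1 ≤ r → r + 1 ≤ n → i r ≠ i (r + 1) →
    y (r + 1) * ψ r * e i = ψ r * y r * e i
  psi_comm : ∀ r s, 1 ≤ r → r + 1 ≤ n → 1 ≤ s → s + 1 ≤ n → r + 1 < s →
    ψ s * ψ r = ψ r * ψ s
  psi_sq_same : ∀ r i, 1 ≤ r → r + 1 ≤ n → i r = i (r + 1) → ψ r * ψ r * e i = 0
  psi_sq_diff : ∀ r i, 1 ≤ r → r + 1 ≤ n → i r ≠ i (r + 1) →
    ψ r * ψ r * e i = -((y r - y (r + 1)) ^ 2) * e i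
  braid_same : ∀ r i, 1 ≤ r → r + 2 ≤ n → (i r = i (r + 1) ∨ i (r + 1) = i (r + 2)) →
    ψ r * ψ (r + 1) * ψ r * e i = ψ (r + 1) * ψ r * ψ (r + 1) * e i
  braid_diff : ∀ r i, 1 ≤ r → r + 2 ≤ n → i r ≠ i (r + 1) → i (r + 1) ≠ i (r + 2) →
    ψ r * ψ (r + 1) * ψ r * e i =
      (ψ (r + 1) * ψ r * ψ (r + 1) + y r - 2 * y (r + 1) + y (r + 2)) * e i

variable {A : Type*} [Ring A] {n : ℕ}

/-- `Ψ j = ψ j * ψ (j+1) * ψ (j-1) * ψ j`. -/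
def PsiBig (K : KLR A n) (j : ℕ) : A := K.ψ j * K.ψ (j + 1) * K.ψ (j - 1) * K.ψ j

/-- `Ψ↓(x,y) = Ψ x * Ψ (x-2) * ⋯ * Ψ y` (the empty product `1` if `x < y`). -/
def chainD (K : KLR A n) (x y : ℕ) : A :=
  ((List.range ((x + 2 - y) / 2)).map fun k => PsiBig K (x - 2 * k)).prod

/-- `Ψ↑(x,y) = Ψ x * Ψ (x+2) * ⋯ * Ψ y` (the empty product `1` if `y < x`). -/
def chainU (K : KLR A n) (x y : ℕ) : A :=
  ((List.range ((y + 2 - x) / 2)).map fun k => PsiBig K (x + 2 * k)).prod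

/-- `ψ_w` along a word `l` of indices. -/
def psiWord (K : KLR A n) (l : List ℕ) : A := (l.map K.ψ).prod

/-- `ψ x * ψ (x+1) * ⋯ * ψ y`. -/
def ascWord (K : KLR A n) (x y : ℕ) : A :=
  psiWord K ((List.range (y + 1 - x)).map fun t => x + t)

/-- The residue sequence `i_λ` of the initial tableau of the hook `(a, 1^b)` at `e = 2`. -/
def iLamGen (b : ℕ) : ℕ → ZMod 2 :=
  fun k => if k ≤ b + 1 then (k : ZMod 2) + 1 else (k : ZMod 2) + (b : ZMod 2) + 1

/-- `normProd K base [j₁, …, j_d] = Ψ↓(j₁, base) * Ψ↓(j₂, base+2) * ⋯ * Ψ↓(j_d, base+2(d-1))`. -/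
def normProd (K : KLR A n) : ℕ → List ℕ → A
  | _, [] => 1
  | base, j :: rest => chainD K j base * normProd K (base + 2) rest

/-- Valid normal-form data `[j₁ < j₂ < ⋯ < j_d]` for a domino tableau of the hook `(a,1^b)`,
`n = a + b`: all `jᵢ` odd, `b + 3 - 2d + 2i ≤ jᵢ₊₁ ≤ n - 2` (written without truncated
subtraction). -/
def NormOK (n b : ℕ) (p : List ℕ) : Prop :=
  2 * p.length ≤ b ∧ List.Chain' (· < ·) p ∧
    ∀ i, (h : i < p.length) → Odd (p.get ⟨i, h⟩) ∧
      b + 3 + 2 * i ≤ p.get ⟨i, h⟩ + 2 * p.length ∧ p.get ⟨i, h⟩ + 2 ≤ n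

/-- The number `r(T)` of `Ψ` factors in the normal form. -/
def rOf (b : ℕ) (p : List ℕ) : ℕ :=
  ∑ i ∈ Finset.range p.length, (p.getD i 0 + 2 * p.length - (b + 1 + 2 * i)) / 2

/-- `[x, x-1, …, y]` (empty if `x < y`). -/
def descList (x y : ℕ) : List ℕ := (List.range (x + 1 - y)).map fun t => x - t

/-- The canonical reduced word of the permutation `w_T` for the standard hook tableau with
leg-entry set `L = {l₁ < ⋯ < l_b}`: the concatenation of the descending runs
`[l_k - 1, l_k - 2, …, k + 1]` for `k = 1, …, b`. -/
def tabWord (L : Finset ℕ) : List ℕ :=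
  (List.range L.card).flatMap fun k => descList ((L.sort (· ≤ ·)).getD k 0 - 1) (k + 2)

/-- Coxeter length as number of inversions in `{1, …, n}`. -/
def invLen (n : ℕ) (w : Equiv.Perm ℕ) : ℕ :=
  (((Finset.Icc 1 n) ×ˢ (Finset.Icc 1 n)).filter fun p => p.1 < p.2 ∧ w p.2 < w p.1).card

/-!
Let `w = g z`. Since `g` is `A`-linear, `w` satisfies the relations `e(i_λ) w = w` and
`ψ_j w = 0` (`j ≠ b + 1`) of `z`, so it suffices to show that such a `w` is a multiple of
`z = v_{T^λ}`. Expand `w` in the basis `v_T`, `T` given by its set `L` of leg entries, and kill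
the coefficients of all `L ≠ {2, …, b + 1}` by downward induction on the largest leg entry `j`.
If the residue sequence of `T` is not `i_λ`, applying `e(i_λ)` kills the coefficient. Otherwise
`b` even forces `j` odd, hence `j < n` as `n` is even; then `ψ_j` sends `v_T` to `v_{T'}`, where
`T'` has `j` replaced by `j + 1`, sends the other basis vectors with largest leg entry `j` to
basis vectors other than `v_{T'}` and kills those with smaller entries, so the coefficient of
`v_{T'}` in `ψ_j w = 0` is the coefficient of `v_T` in `w`.
-/

open Finset

lemma Finset.sort_insert_of_forall_lt {α : Type*} [LinearOrder α] {s : Finset α} {a : α}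
    (h : ∀ x ∈ s, x < a) : (insert a s).sort (· ≤ ·) = s.sort (· ≤ ·) ++ [a] := by
  have hnodup : (s.sort (· ≤ ·) ++ [a]).Nodup :=
    List.nodup_append.mpr ⟨s.sort_nodup _, List.nodup_singleton a, fun x hx y hy => by
      simp only [List.mem_singleton] at hy
      exact hy ▸ (h x (by simpa using hx)).ne⟩
  have hsorted : (s.sort (· ≤ ·) ++ [a]).Pairwise (· ≤ ·) :=
    List.pairwise_append.mpr ⟨s.pairwise_sort _, List.pairwise_singleton _ a, fun x hx y hy => by
      simp only [List.mem_singleton] at hy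
      exact hy ▸ (h x (by simpa using hx)).le⟩
  rw [← (List.toFinset_sort (· ≤ ·) hnodup).mpr hsorted]
  congr 1
  ext x
  simp

lemma Finset.eq_of_insert_erase_eq {α : Type*} [DecidableEq α] {s t : Finset α} {a c : α}
    (hs : a ∈ s) (ht : a ∈ t) (hcs : c ∉ s) (hct : c ∉ t)
    (h : insert c (s.erase a) = insert c (t.erase a)) : s = t := by
  have h' := congrArg (·.erase c) h
  simp only [Finset.erase_insert (fun h => hcs (Finset.mem_of_mem_erase h)),
    Finset.erase_insert (fun h => hct (Finset.mem_of_mem_erase h))] at h'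
  rw [← Finset.insert_erase hs, ← Finset.insert_erase ht, h']

lemma Finset.forall_mem_erase_lt {α : Type*} [PartialOrder α] [DecidableEq α] {s : Finset α}
    {a : α} (h : ∀ x ∈ s, x ≤ a) : ∀ x ∈ s.erase a, x < a :=
  fun x hx => lt_of_le_of_ne (h x (Finset.mem_of_mem_erase hx)) (Finset.ne_of_mem_erase hx)

lemma Module.Basis.repr_map_apply_eq_mul_of_forall_ne {ι κ R M N : Type*} [Fintype ι]
    [Semiring R] [AddCommMonoid M] [Module R M] [AddCommMonoid N] [Module R N]
    (B : Module.Basis ι R M) (C : Module.Basis κ R N) (f : M →ₗ[R] N) (w : M) {i : ι} {k : κ}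
    (h : ∀ j ≠ i, B.repr w j * C.repr (f (B j)) k = 0) :
    C.repr (f w) k = B.repr w i * C.repr (f (B i)) k := by
  calc C.repr (f w) k = ∑ j, B.repr w j * C.repr (f (B j)) k := by
        conv_lhs => rw [← B.sum_repr w]
        simp only [map_sum, map_smul, Finsupp.finsetSum_apply, Finsupp.smul_apply, smul_eq_mul]
    _ = _ := Finset.sum_eq_single i (fun j _ hj => h j hj) (by simp)

lemma swapSeq_eq_comp (r : ℕ) (i : ℕ → ZMod 2) : swapSeq r i = i ∘ Equiv.swap r (r + 1) := by
  funext k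
  simp only [swapSeq, Function.comp_apply, Equiv.swap_apply_def]
  split_ifs <;> rfl

def wordPerm (l : List ℕ) : Equiv.Perm ℕ := (l.map fun r => Equiv.swap r (r + 1)).prod

lemma wordPerm_cons (r : ℕ) (l : List ℕ) :
    wordPerm (r :: l) = Equiv.swap r (r + 1) * wordPerm l := by
  simp [wordPerm]

lemma wordPerm_append (l₁ l₂ : List ℕ) : wordPerm (l₁ ++ l₂) = wordPerm l₁ * wordPerm l₂ := by
  simp [wordPerm]

lemma wordPerm_apply_of_forall_lt {l : List ℕ} {t : ℕ} (h : ∀ r ∈ l, r + 1 < t) :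
    wordPerm l t = t := by
  induction l with
  | nil => rfl
  | cons r l ih =>
    have hr := h r (by simp)
    rw [wordPerm_cons, Equiv.Perm.mul_apply, ih fun x hx => h x (by simp [hx])]
    exact Equiv.swap_apply_of_ne_of_ne (by omega) (by omega)

lemma psiWord_cons (K : KLR A n) (r : ℕ) (l : List ℕ) :
    psiWord K (r :: l) = K.ψ r * psiWord K l := by
  simp [psiWord]

lemma psiWord_append (K : KLR A n) (l₁ l₂ : List ℕ) :
    psiWord K (l₁ ++ l₂) = psiWord K l₁ * psiWord K l₂ := by
  simp [psiWord]

namespace KLR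

lemma e_mul_psi (K : KLR A n) {r : ℕ} (hr : 1 ≤ r) (hrn : r + 1 ≤ n) (i : ℕ → ZMod 2) :
    K.e i * K.ψ r = K.ψ r * K.e (i ∘ Equiv.swap r (r + 1)) := by
  have h := K.psi_e r (i ∘ Equiv.swap r (r + 1)) hr hrn
  have hi : i ∘ Equiv.swap r (r + 1) ∘ Equiv.swap r (r + 1) = i :=
    funext fun k => congrArg i (Equiv.swap_apply_self _ _ k)
  rw [swapSeq_eq_comp, Function.comp_assoc, hi] at h
  exact h.symm

lemma e_mul_psiWord (K : KLR A n) {l : List ℕ} (hl : ∀ r ∈ l, 1 ≤ r ∧ r + 1 ≤ n)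
    (i : ℕ → ZMod 2) : K.e i * psiWord K l = psiWord K l * K.e (i ∘ wordPerm l) := by
  induction l generalizing i with
  | nil => simp [psiWord, wordPerm]
  | cons r l ih =>
    have hr := hl r (by simp)
    rw [psiWord_cons, ← mul_assoc, K.e_mul_psi hr.1 hr.2, mul_assoc,
      ih (fun x hx => hl x (by simp [hx])), ← mul_assoc, wordPerm_cons, Equiv.Perm.coe_mul,
      Function.comp_assoc]

lemma psi_mul_psiWord_comm (K : KLR A n) {j : ℕ} (hj : j + 1 ≤ n) {l : List ℕ}
    (hl : ∀ r ∈ l, 1 ≤ r ∧ r + 1 < j) : K.ψ j * psiWord K l = psiWord K l * K.ψ j := by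
  induction l with
  | nil => simp [psiWord]
  | cons r l ih =>
    have hr := hl r (by simp)
    rw [psiWord_cons, ← mul_assoc, K.psi_comm r j hr.1 (by omega) (by omega) hj hr.2, mul_assoc,
      ih fun x hx => hl x (by simp [hx]), ← mul_assoc]

end KLR

lemma descList_of_lt {x y : ℕ} (h : x < y) : descList x y = [] := by
  simp [descList, show x + 1 - y = 0 by omega]

lemma descList_succ {x y : ℕ} (h : y ≤ x + 1) :
    descList (x + 1) y = (x + 1) :: descList x y := by
  simp only [descList, show x + 1 + 1 - y = (x + 1 - y) + 1 by omega, List.range_succ_eq_map,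
    List.map_cons, List.map_map]
  simp [Function.comp_def]

lemma mem_descList {x y r : ℕ} (h : r ∈ descList x y) : y ≤ r ∧ r ≤ x := by
  simp only [descList, List.mem_map, List.mem_range] at h
  obtain ⟨t, ht, rfl⟩ := h
  omega

lemma wordPerm_descList_apply {x y : ℕ} (h : y ≤ x + 1) : wordPerm (descList x y) y = x + 1 := by
  induction x with
  | zero =>
    rcases (show y = 0 ∨ y = 1 by omega) with rfl | rfl
    · simp [descList, wordPerm]
    · simp [descList_of_lt, wordPerm]
  | succ x ih =>
    rcases (show y ≤ x + 1 ∨ y = x + 2 by omega) with hy | rfl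
    · rw [descList_succ hy, wordPerm_cons, Equiv.Perm.mul_apply, ih hy, Equiv.swap_apply_left]
    · simp [descList_of_lt, wordPerm]

def legWord (s : List ℕ) : List ℕ :=
  (List.range s.length).flatMap fun k => descList (s.getD k 0 - 1) (k + 2)

lemma tabWord_eq_legWord (L : Finset ℕ) : tabWord L = legWord (L.sort (· ≤ ·)) := by
  rw [tabWord, legWord, Finset.length_sort]

lemma legWord_append_singleton (s : List ℕ) (m : ℕ) :
    legWord (s ++ [m]) = legWord s ++ descList (m - 1) (s.length + 2) := by
  simp only [legWord, List.length_append, List.length_singleton, List.range_succ,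
    List.flatMap_append, List.flatMap_singleton, List.getD_append_right _ _ _ _ le_rfl,
    Nat.sub_self, List.getD_cons_zero]
  congr 1
  refine List.flatMap_congr fun k hk => ?_
  rw [List.getD_append _ _ _ _ (List.mem_range.mp hk)]

lemma mem_legWord {s : List ℕ} {r : ℕ} (h : r ∈ legWord s) : 2 ≤ r ∧ ∃ x ∈ s, r < x := by
  simp only [legWord, List.mem_flatMap, List.mem_range] at h
  obtain ⟨k, hk, hr⟩ := h
  have := mem_descList hr
  rw [List.getD_eq_getElem _ _ hk] at this
  exact ⟨by omega, _, List.getElem_mem hk, by omega⟩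

lemma mem_tabWord {L : Finset ℕ} {r : ℕ} (h : r ∈ tabWord L) : 2 ≤ r ∧ ∃ x ∈ L, r < x := by
  rw [tabWord_eq_legWord] at h
  simpa using mem_legWord h

lemma tabWord_insert_of_forall_lt {S : Finset ℕ} {a : ℕ} (h : ∀ x ∈ S, x < a) :
    tabWord (insert a S) = legWord (S.sort (· ≤ ·)) ++ descList (a - 1) (S.card + 2) := by
  rw [tabWord_eq_legWord, Finset.sort_insert_of_forall_lt h, legWord_append_singleton,
    Finset.length_sort]

lemma tabWord_Icc (b : ℕ) : tabWord (Finset.Icc 2 (b + 1)) = [] := by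
  induction b with
  | zero => rfl
  | succ b ih =>
    have h : Finset.Icc 2 (b + 2) = insert (b + 2) (Finset.Icc 2 (b + 1)) := by
      ext x; simp only [Finset.mem_insert, Finset.mem_Icc]; omega
    rw [h, tabWord_insert_of_forall_lt fun x hx => by simp only [Finset.mem_Icc] at hx; omega,
      ← tabWord_eq_legWord, ih, descList_of_lt (by simp)]
    rfl

lemma wordPerm_tabWord_insert_apply {S : Finset ℕ} {a : ℕ} (h : ∀ x ∈ S, x < a)
    (hS : S.card + 2 ≤ a) : wordPerm (tabWord (insert a S)) (S.card + 2) = a := by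
  have hfix : ∀ r ∈ legWord (S.sort (· ≤ ·)), r + 1 < a := fun r hr => by
    obtain ⟨-, x, hx, hrx⟩ := mem_legWord hr
    have := h x (by simpa using hx)
    omega
  rw [tabWord_insert_of_forall_lt h, wordPerm_append, Equiv.Perm.mul_apply,
    wordPerm_descList_apply (by omega), Nat.sub_add_cancel (by omega),
    wordPerm_apply_of_forall_lt hfix]

namespace KLR

lemma psi_mul_psiWord_tabWord_comm (K : KLR A n) {L : Finset ℕ} {j : ℕ} (h : ∀ x ∈ L, x < j)
    (hj : j + 1 ≤ n) : K.ψ j * psiWord K (tabWord L) = psiWord K (tabWord L) * K.ψ j :=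
  K.psi_mul_psiWord_comm hj fun r hr => by
    obtain ⟨h2, x, hx, hrx⟩ := mem_tabWord hr
    have := h x hx
    omega

lemma psi_mul_psiWord_tabWord_insert (K : KLR A n) {S : Finset ℕ} {a : ℕ} (h : ∀ x ∈ S, x < a)
    (hS : S.card + 2 ≤ a) (ha : a + 1 ≤ n) :
    K.ψ a * psiWord K (tabWord (insert a S)) = psiWord K (tabWord (insert (a + 1) S)) := by
  have hcomm := K.psi_mul_psiWord_comm ha (l := legWord (S.sort (· ≤ ·))) fun r hr => by
    obtain ⟨h2, x, hx, hrx⟩ := mem_legWord hr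
    have := h x (by simpa using hx)
    omega
  obtain ⟨a, rfl⟩ : ∃ c, a = c + 1 := ⟨a - 1, by omega⟩
  rw [tabWord_insert_of_forall_lt h, tabWord_insert_of_forall_lt fun x hx => (h x hx).trans
    (Nat.lt_add_one _), psiWord_append, psiWord_append, ← mul_assoc, hcomm, mul_assoc,
    Nat.add_sub_cancel, Nat.add_sub_cancel, descList_succ (by omega), psiWord_cons]

end KLR

lemma iLamGen_of_even {b : ℕ} (hb : Even b) (k : ℕ) : iLamGen b k = k + 1 := by
  have : (b : ZMod 2) = 0 := ZMod.natCast_eq_zero_iff_even.mpr hb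
  simp only [iLamGen, this, add_zero, ite_self]

lemma lt_of_iLamGen_eq {b j : ℕ} (hb : Even b) (hn : Even n) (hjn : j ≤ n)
    (h : iLamGen b j = iLamGen b (b + 1)) : j < n := by
  rw [iLamGen_of_even hb, iLamGen_of_even hb, add_left_inj, ZMod.natCast_eq_natCast_iff'] at h
  rw [Nat.even_iff] at hb hn
  omega

section HookTableaux

variable {b : ℕ} {L : Finset ℕ}

lemma eq_Icc_of_mem_powersetCard (hL : L ∈ (Icc 2 n).powersetCard b) (h : ∀ x ∈ L, x ≤ b + 1) :
    L = Icc 2 (b + 1) := by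
  obtain ⟨hsub, hcard⟩ := mem_powersetCard.mp hL
  refine Finset.eq_of_subset_of_card_le (fun x hx => ?_) (by simp [hcard])
  have := mem_Icc.mp (hsub hx)
  exact mem_Icc.mpr ⟨this.1, h x hx⟩

lemma add_one_le_of_mem_powersetCard (hL : L ∈ (Icc 2 n).powersetCard b) {j : ℕ} (hj : j ∈ L)
    (hmax : ∀ x ∈ L, x ≤ j) : b + 1 ≤ j := by
  obtain ⟨hsub, hcard⟩ := mem_powersetCard.mp hL
  have : L ⊆ Icc 2 j := fun x hx => mem_Icc.mpr ⟨(mem_Icc.mp (hsub hx)).1, hmax x hx⟩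
  have := card_le_card this
  have := (mem_Icc.mp (hsub hj)).1
  simp only [Nat.card_Icc] at *
  omega

lemma insert_erase_mem_powersetCard (hL : L ∈ (Icc 2 n).powersetCard b) {j : ℕ} (hj : j ∈ L)
    (hmax : ∀ x ∈ L, x ≤ j) (hjn : j + 1 ≤ n) :
    insert (j + 1) (L.erase j) ∈ (Icc 2 n).powersetCard b := by
  obtain ⟨hsub, hcard⟩ := mem_powersetCard.mp hL
  have hj1 : j + 1 ∉ L.erase j := fun h => by have := hmax _ (mem_of_mem_erase h); omega
  refine mem_powersetCard.mpr ⟨insert_subset_iff.mpr ⟨?_, (erase_subset _ _).trans hsub⟩, ?_⟩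
  · have := (mem_Icc.mp (hsub hj)).1
    exact mem_Icc.mpr ⟨by omega, hjn⟩
  · rw [card_insert_of_notMem hj1, card_erase_of_mem hj, hcard]
    have := card_pos.mpr ⟨j, hj⟩
    omega

lemma card_erase_add_two_of_mem_powersetCard (hL : L ∈ (Icc 2 n).powersetCard b) {j : ℕ}
    (hj : j ∈ L) : (L.erase j).card + 2 = b + 1 := by
  rw [card_erase_of_mem hj, (mem_powersetCard.mp hL).2]
  have := (mem_powersetCard.mp hL).2 ▸ card_pos.mpr ⟨j, hj⟩
  omega

lemma wordPerm_tabWord_apply (hL : L ∈ (Icc 2 n).powersetCard b) {j : ℕ} (hj : j ∈ L)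
    (hmax : ∀ x ∈ L, x ≤ j) : wordPerm (tabWord L) (b + 1) = j := by
  have hS := card_erase_add_two_of_mem_powersetCard hL hj
  have := wordPerm_tabWord_insert_apply (forall_mem_erase_lt hmax)
    (hS.trans_le (add_one_le_of_mem_powersetCard hL hj hmax))
  rwa [insert_erase hj, hS] at this

end HookTableaux

section SpechtModule

variable {F M : Type*} [Field F] [AddCommGroup M] [Module A M] [Module F M] {b : ℕ}
  {K : KLR A n} {z : M}
  {B : Module.Basis ((Icc 2 n).powersetCard b) F M}

open scoped Classical in
lemma e_smul_basis (hB : ∀ L, B L = psiWord K (tabWord L.1) • z)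
    (he1 : K.e (iLamGen b) • z = z) (he2 : ∀ i, i ≠ iLamGen b → K.e i • z = 0)
    (i : ℕ → ZMod 2) (L : (Icc 2 n).powersetCard b) :
    K.e i • B L = if i ∘ wordPerm (tabWord L.1) = iLamGen b then B L else 0 := by
  have hsub := (mem_powersetCard.mp L.2).1
  have hl : ∀ r ∈ tabWord L.1, 1 ≤ r ∧ r + 1 ≤ n := fun r hr => by
    obtain ⟨h2, x, hx, hrx⟩ := mem_tabWord hr
    have := (mem_Icc.mp (hsub hx)).2
    omega
  rw [hB, ← mul_smul, K.e_mul_psiWord hl, mul_smul]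
  split_ifs with h
  · rw [h, he1]
  · rw [he2 _ h, smul_zero]

lemma psi_smul_basis_eq_zero (hB : ∀ L, B L = psiWord K (tabWord L.1) • z)
    (hpsiz : ∀ j, 1 ≤ j → j + 1 ≤ n → j ≠ b + 1 → K.ψ j • z = 0)
    {L : (Icc 2 n).powersetCard b} {j : ℕ} (h : ∀ x ∈ L.1, x < j) (hj : 1 ≤ j)
    (hjn : j + 1 ≤ n) (hjb : j ≠ b + 1) : K.ψ j • B L = 0 := by
  rw [hB, ← mul_smul, K.psi_mul_psiWord_tabWord_comm h hjn, mul_smul, hpsiz j hj hjn hjb,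
    smul_zero]

lemma psi_smul_basis_of_forall_le (hB : ∀ L, B L = psiWord K (tabWord L.1) • z)
    {L : (Icc 2 n).powersetCard b} {j : ℕ} (hj : j ∈ L.1) (hmax : ∀ x ∈ L.1, x ≤ j)
    (hjn : j + 1 ≤ n) :
    K.ψ j • B L = B ⟨_, insert_erase_mem_powersetCard L.2 hj hmax hjn⟩ := by
  have hS := card_erase_add_two_of_mem_powersetCard L.2 hj
  rw [hB, hB, ← mul_smul, ← K.psi_mul_psiWord_tabWord_insert (forall_mem_erase_lt hmax)
    (hS.trans_le (add_one_le_of_mem_powersetCard L.2 hj hmax)) hjn, insert_erase hj]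

lemma repr_eq_zero_of_residue_ne [SMulCommClass A F M]
    (hB : ∀ L, B L = psiWord K (tabWord L.1) • z) (he1 : K.e (iLamGen b) • z = z)
    (he2 : ∀ i, i ≠ iLamGen b → K.e i • z = 0) {w : M} (hw : K.e (iLamGen b) • w = w)
    {L : (Icc 2 n).powersetCard b} (hL : iLamGen b ∘ wordPerm (tabWord L.1) ≠ iLamGen b) :
    B.repr w L = 0 := by
  have key := B.repr_map_apply_eq_mul_of_forall_ne B
    (DistribSMul.toLinearMap F M (K.e (iLamGen b))) w (i := L) (k := L) fun L' hL' => by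
      rw [DistribSMul.toLinearMap_apply, e_smul_basis hB he1 he2]
      split_ifs
      · rw [B.repr_self, Finsupp.single_apply, if_neg hL', mul_zero]
      · rw [map_zero, Finsupp.zero_apply, mul_zero]
  rwa [DistribSMul.toLinearMap_apply, DistribSMul.toLinearMap_apply, hw,
    e_smul_basis hB he1 he2, if_neg hL, map_zero, Finsupp.zero_apply, mul_zero] at key

lemma repr_eq_zero_of_psi [SMulCommClass A F M] (hB : ∀ L, B L = psiWord K (tabWord L.1) • z)
    (hpsiz : ∀ j, 1 ≤ j → j + 1 ≤ n → j ≠ b + 1 → K.ψ j • z = 0) {w : M}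
    (hw : ∀ j, 1 ≤ j → j + 1 ≤ n → j ≠ b + 1 → K.ψ j • w = 0)
    {L : (Icc 2 n).powersetCard b} {j : ℕ} (hj : j ∈ L.1) (hmax : ∀ x ∈ L.1, x ≤ j)
    (hjn : j + 1 ≤ n) (hjb : j ≠ b + 1)
    (habove : ∀ L' : (Icc 2 n).powersetCard b, (∃ x ∈ L'.1, j < x) → B.repr w L' = 0) :
    B.repr w L = 0 := by
  have hj1 : 1 ≤ j := by have := mem_Icc.mp ((mem_powersetCard.mp L.2).1 hj); omega
  have key := B.repr_map_apply_eq_mul_of_forall_ne B (DistribSMul.toLinearMap F M (K.ψ j)) w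
    (i := L) (k := ⟨_, insert_erase_mem_powersetCard L.2 hj hmax hjn⟩) fun L' hL' => by
      rw [DistribSMul.toLinearMap_apply]
      by_cases hup : ∃ x ∈ L'.1, j < x
      · rw [habove L' hup, zero_mul]
      push Not at hup
      by_cases hjL' : j ∈ L'.1
      · rw [psi_smul_basis_of_forall_le hB hjL' hup hjn, B.repr_self, Finsupp.single_apply,
          if_neg, mul_zero]
        intro h
        refine hL' (Subtype.ext (Finset.eq_of_insert_erase_eq hjL' hj ?_ ?_ (congrArg (·.1) h)))
        · exact fun h => by have := hup _ h; omega
        · exact fun h => by have := hmax _ h; omega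
      · rw [psi_smul_basis_eq_zero hB hpsiz (fun x hx => lt_of_le_of_ne (hup x hx)
          (ne_of_mem_of_not_mem hx hjL')) hj1 hjn hjb, map_zero, Finsupp.zero_apply, mul_zero]
  rwa [DistribSMul.toLinearMap_apply, DistribSMul.toLinearMap_apply, hw j hj1 hjn hjb,
    psi_smul_basis_of_forall_le hB hj hmax hjn, B.repr_self, Finsupp.single_eq_same, mul_one,
    map_zero, Finsupp.zero_apply, eq_comm] at key

theorem repr_eq_zero_of_relations [SMulCommClass A F M] (hb : Even b) (hn : Even n)
    (hB : ∀ L, B L = psiWord K (tabWord L.1) • z)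
    (he1 : K.e (iLamGen b) • z = z) (he2 : ∀ i, i ≠ iLamGen b → K.e i • z = 0)
    (hpsiz : ∀ j, 1 ≤ j → j + 1 ≤ n → j ≠ b + 1 → K.ψ j • z = 0) {w : M}
    (hew : K.e (iLamGen b) • w = w)
    (hψw : ∀ j, 1 ≤ j → j + 1 ≤ n → j ≠ b + 1 → K.ψ j • w = 0)
    (L : (Icc 2 n).powersetCard b) (hL : L.1 ≠ Icc 2 (b + 1)) : B.repr w L = 0 := by
  obtain ⟨x, hxL, hbx⟩ : ∃ x ∈ L.1, b + 1 < x := by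
    by_contra! h
    exact hL (eq_Icc_of_mem_powersetCard L.2 h)
  have hne : L.1.Nonempty := ⟨x, hxL⟩
  have hjL := L.1.max'_mem hne
  have hmax : ∀ y ∈ L.1, y ≤ L.1.max' hne := fun y hy => L.1.le_max' y hy
  have hxj := hmax x hxL
  by_cases hfix : iLamGen b ∘ wordPerm (tabWord L.1) = iLamGen b
  · have hjn : L.1.max' hne < n := by
      refine lt_of_iLamGen_eq hb hn (mem_Icc.mp ((mem_powersetCard.mp L.2).1 hjL)).2 ?_
      simpa [wordPerm_tabWord_apply L.2 hjL hmax] using congrFun hfix (b + 1)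
    refine repr_eq_zero_of_psi hB hpsiz hψw hjL hmax hjn (by omega) fun L' ⟨y, hyL', hjy⟩ => ?_
    refine repr_eq_zero_of_relations hb hn hB he1 he2 hpsiz hew hψw L' fun h => ?_
    rw [h, mem_Icc] at hyL'
    omega
  · exact repr_eq_zero_of_residue_ne hB he1 he2 hew hfix
termination_by n - L.1.sup id
decreasing_by
  have := le_sup (f := id) hyL'
  have := (mem_Icc.mp ((mem_powersetCard.mp L'.2).1 hyL')).2
  have : L.1.sup id ≤ L.1.max' hne := Finset.sup_le hmax
  simp only [id] at *
  omega

theorem exists_eq_smul_of_relations [SMulCommClass A F M] (hb : Even b) (hn : Even n)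
    (hbn : b + 1 ≤ n) (hB : ∀ L, B L = psiWord K (tabWord L.1) • z)
    (he1 : K.e (iLamGen b) • z = z) (he2 : ∀ i, i ≠ iLamGen b → K.e i • z = 0)
    (hpsiz : ∀ j, 1 ≤ j → j + 1 ≤ n → j ≠ b + 1 → K.ψ j • z = 0) {w : M}
    (hew : K.e (iLamGen b) • w = w)
    (hψw : ∀ j, 1 ≤ j → j + 1 ≤ n → j ≠ b + 1 → K.ψ j • w = 0) : ∃ c : F, w = c • z := by
  have hL₀ : Icc 2 (b + 1) ∈ (Icc 2 n).powersetCard b :=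
    mem_powersetCard.mpr ⟨Icc_subset_Icc le_rfl hbn, by simp⟩
  refine ⟨B.repr w ⟨_, hL₀⟩, ?_⟩
  calc w = ∑ L, B.repr w L • B L := (B.sum_repr w).symm
    _ = B.repr w ⟨_, hL₀⟩ • B ⟨_, hL₀⟩ := Finset.sum_eq_single _ (fun L _ hL => by
        rw [repr_eq_zero_of_relations hb hn hB he1 he2 hpsiz hew hψw L
          (fun h => hL (Subtype.ext h)), zero_smul]) (by simp)
    _ = B.repr w ⟨_, hL₀⟩ • z := by rw [hB, tabWord_Icc, psiWord, List.map_nil, List.prod_nil,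
        one_smul]

end SpechtModule

theorem specht_hook_endomorphisms_scalar_of_even_even_general
    {F M : Type*} [Field F] [Algebra F A]
    [AddCommGroup M] [Module A M] [Module F M] [IsScalarTower F A M]
    (a b : ℕ) (hn : n = a + b) (ha : 1 ≤ a) (haeven : Even a) (hbeven : Even b)
    (K : KLR A n) (z : M)
    (he1 : K.e (iLamGen b) • z = z)
    (he2 : ∀ i, i ≠ iLamGen b → K.e i • z = 0)
    (hpsiz : ∀ j, 1 ≤ j → j + 1 ≤ n → j ≠ b + 1 → K.ψ j • z = 0)
    (hgen : Submodule.span A {z} = ⊤)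
    (B : Module.Basis ((Finset.Icc 2 n).powersetCard b) F M)
    (hB : ∀ L, B L = psiWord K (tabWord L.1) • z) :
    ∀ g : M →ₗ[A] M, ∃ c : F, ∀ m : M, g m = c • m := by
  intro g
  obtain ⟨c, hc⟩ := exists_eq_smul_of_relations hbeven (hn ▸ haeven.add hbeven) (by omega) hB
    he1 he2 hpsiz (w := g z) (by rw [← map_smul, he1])
    fun j h₁ h₂ h₃ => by rw [← map_smul, hpsiz j h₁ h₂ h₃, map_zero]
  refine ⟨c, fun m => ?_⟩
  obtain ⟨x, rfl⟩ := Submodule.mem_span_singleton.mp (hgen ▸ Submodule.mem_top (x := m))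
  rw [map_smul, hc, smul_comm]

/-- Theorem `a/b evens`: `e = 2` (`q = -1`), `λ = (a, 1^b)` with `a`, `b`
both even.  The Specht module `S_λ` of the Hecke algebra (in its KLR presentation, with
generator `z` and homogeneous basis `{v_T : T ∈ Std(λ)}`, where `v_T = ψ_{w_T} z` is indexed
below by the `b`-element set of leg entries of `T`) has one-dimensional endomorphism algebra:
every endomorphism is a scalar multiple of the identity.  In particular `S_λ` is
indecomposable. -/
theorem specht_hook_endomorphisms_scalar_of_even_even
    {F M : Type*} [Field F] [Algebra F A]
    [AddCommGroup M] [Module A M] [Module F M] [IsScalarTower F A M]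
    (a b : ℕ) (hn : n = a + b) (ha : 1 ≤ a) (haeven : Even a) (hbeven : Even b)
    (K : KLR A n) (z : M)
    (hy : ∀ k, 1 ≤ k → k ≤ n → K.y k • z = 0)
    (he1 : K.e (iLamGen b) • z = z)
    (he2 : ∀ i, i ≠ iLamGen b → K.e i • z = 0)
    (hpsiz : ∀ j, 1 ≤ j → j + 1 ≤ n → j ≠ b + 1 → K.ψ j • z = 0)
    (hgar : ascWord K 1 (b + 1) • z = 0)
    (hgen : Submodule.span A {z} = ⊤)
    (B : Module.Basis ((Finset.Icc 2 n).powersetCard b) F M)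
    (hB : ∀ L, B L = psiWord K (tabWord L.1) • z) :
    ∀ g : M →ₗ[A] M, ∃ c : F, ∀ m : M, g m = c • m :=
  specht_hook_endomorphisms_scalar_of_even_even_general a b hn ha haeven hbeven K z he1 he2 hpsiz
    hgen B hB
end

section
/- Let e = 2 and λ = (a,1^b) with b even, and let T be a domino tableau with basis vector v_T ∈ S_λ. For odd j with 3 ≤ j ≤ n−2 and Ψ_j = ψ_j ψ_{j+1} ψ_{j−1} ψ_j: (1) ψ_1 ψ_2⋯ψ_j Ψ_i v_T = Ψ_i ψ_1⋯ψ_j v_T for all odd i with j+4 ≤ i ≤ n−2; (2) ψ_1⋯ψ_j Ψ_{j+2} v_T = ψ_{j+2} ψ_{j+3} ψ_1⋯ψ_{j+2} v_T; (3) ψ_1⋯ψ_j Ψ_j v_T = −2 ψ_1⋯ψ_j v_T; (4) ψ_1⋯ψ_j Ψ_{j−2} v_T = Ψ_{j−1} ψ_1⋯ψ_j v_T + ψ_j ψ_{j−1} ψ_1⋯ψ_{j−2} v_T; (5) for odd i with 3 ≤ i ≤ j−4, ψ_1⋯ψ_j Ψ_i v_T = Ψ_{i+1} ψ_1⋯ψ_j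 v_T + ψ_{i+2} ψ_{i+1} ψ_{i+3} ψ_{i+4}⋯ψ_j ψ_1 ψ_2⋯ψ_i v_T. -/
open scoped BigOperators

variable {A : Type*} [Ring A] {n : ℕ}

/-!
Since `b` is even, `i_λ` is the alternating sequence `k ↦ k + 1` in `ZMod 2`. Call `u` a domino
vector if it has residue `i_λ` and is killed by every `y_k` and by every `ψ_r` with `r` even; `z`
is one. On a domino vector the `y`-correction of the braid relation acts by zero, so for odd `s`
both `ψ_s ψ_{s±1} ψ_s u = ψ_{s±1} ψ_s ψ_{s±1} u = 0`, and from this `Ψ_s u` is again a domino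
vector. So every `v_T` is one, and the five identities become local computations.

(1) and (2) only commute distant generators. For (3), the residues at `j, j+1` differ, so `ψ_j²`
acts on `ψ_{j+1} ψ_{j-1} ψ_j v_T` as `-(y_j - y_{j+1})²`, and pushing the `y`'s down to `v_T`
leaves `-2 ψ_j v_T`. For (4) and (5), after commuting `ψ_{i+3} ⋯ ψ_j` to the right and
`ψ_1 ⋯ ψ_{i-2}` to the left, five strands `i-1, …, i+3` with residues `1, 0, 1, 0, 1` remain;
there the braid relation at `i` contributes `y_i - 2 y_{i+1} + y_{i+2}`, whose first term gives
the correction term and whose other two are annihilated by `ψ_{i-1}² = 0`.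
-/

lemma Commute.smul_smul_comm {R M : Type*} [Monoid R] [MulAction R M] {a b : R}
    (h : Commute a b) (u : M) : a • b • u = b • a • u := by
  rw [smul_smul, h.eq, ← smul_smul]

namespace KLR

variable {M : Type*} [AddCommGroup M] [Module A M]

lemma iLamGen_of_even {b : ℕ} (hb : Even b) (k : ℕ) : iLamGen b k = (k : ZMod 2) + 1 := by
  simp [iLamGen, (ZMod.natCast_eq_zero_iff_even).2 hb]

lemma swapSeq_psiBig_eq_self {κ : ℕ → ZMod 2} {t : ℕ} (h₀ : κ t = κ (t + 2))
    (h₁ : κ (t + 1) = κ (t + 3)) :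
    swapSeq (t + 1) (swapSeq (t + 2) (swapSeq t (swapSeq (t + 1) κ))) = κ := by
  funext k
  simp only [swapSeq]
  split_ifs <;> subst_vars <;> first | omega | simp_all [add_assoc]

lemma ascWord_eq_prod (K : KLR A n) (x y : ℕ) :
    ascWord K x y = ((List.range' x (y + 1 - x)).map K.ψ).prod := by
  simp [ascWord, psiWord, List.range'_eq_map_range, Function.comp_def]

lemma ascWord_of_lt (K : KLR A n) {x y : ℕ} (h : y < x) : ascWord K x y = 1 := by
  simp [ascWord_eq_prod, Nat.sub_eq_zero_of_le h]

lemma ascWord_append (K : KLR A n) {x m y : ℕ} (h1 : x ≤ m + 1) (h2 : m ≤ y) :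
    ascWord K x y = ascWord K x m * ascWord K (m + 1) y := by
  have split := List.range'_append (s := x) (m := m + 1 - x) (n := y - m) (step := 1)
  rw [show x + 1 * (m + 1 - x) = m + 1 by omega, show m + 1 - x + (y - m) = y + 1 - x by omega]
    at split
  rw [ascWord_eq_prod, ascWord_eq_prod, ascWord_eq_prod, ← split, List.map_append,
    List.prod_append, show y + 1 - (m + 1) = y - m by omega]

lemma ascWord_self (K : KLR A n) (x : ℕ) : ascWord K x x = K.ψ x := by
  simp [ascWord_eq_prod]

lemma ascWord_succ (K : KLR A n) {x y : ℕ} (h : x ≤ y + 1) :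
    ascWord K x (y + 1) = ascWord K x y * K.ψ (y + 1) := by
  rw [ascWord_append K h le_self_add, ascWord_self]

lemma ascWord_four (K : KLR A n) (d : ℕ) :
    ascWord K (d + 1) (d + 4) = K.ψ (d + 1) * K.ψ (d + 2) * K.ψ (d + 3) * K.ψ (d + 4) := by
  rw [ascWord_eq_prod, show d + 4 + 1 - (d + 1) = 4 by omega]
  simp [List.range'_succ, mul_assoc, add_assoc]

lemma ascWord_two (K : KLR A n) (d : ℕ) :
    ascWord K (d + 1) (d + 2) = K.ψ (d + 1) * K.ψ (d + 2) := by
  rw [ascWord_eq_prod, show d + 2 + 1 - (d + 1) = 2 by omega]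
  simp [List.range'_succ, add_assoc]

lemma commute_ascWord {K : KLR A n} {a : A} {x y : ℕ}
    (h : ∀ r, x ≤ r → r ≤ y → Commute a (K.ψ r)) : Commute a (ascWord K x y) := by
  rw [ascWord_eq_prod]
  refine Commute.list_prod_right _ _ fun c hc => ?_
  obtain ⟨r, hr, rfl⟩ := List.mem_map.1 hc
  rw [List.mem_range'_1] at hr
  exact h r hr.1 (by omega)

lemma commute_psi_psi (K : KLR A n) (r s : ℕ) (hr : 1 ≤ r := by omega)
    (hrn : r + 1 ≤ n := by omega) (hs : 1 ≤ s := by omega) (hsn : s + 1 ≤ n := by omega)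
    (h : r + 2 ≤ s ∨ s + 2 ≤ r := by omega) : Commute (K.ψ r) (K.ψ s) := by
  rcases h with h | h
  · exact (K.psi_comm r s hr hrn hs hsn h).symm
  · exact K.psi_comm s r hs hsn hr hrn h

lemma commute_y_psi (K : KLR A n) (s r : ℕ) (hs : 1 ≤ s := by omega) (hsn : s ≤ n := by omega)
    (hr : 1 ≤ r := by omega) (hrn : r + 1 ≤ n := by omega) (h : s ≠ r := by omega)
    (h' : s ≠ r + 1 := by omega) : Commute (K.y s) (K.ψ r) :=
  K.y_psi_comm r s hr hrn hs hsn h h'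

lemma psiBig_succ (K : KLR A n) (t : ℕ) :
    PsiBig K (t + 1) = K.ψ (t + 1) * K.ψ (t + 2) * K.ψ t * K.ψ (t + 1) := rfl

lemma psiBig_succ_smul (K : KLR A n) (t : ℕ) (u : M) :
    PsiBig K (t + 1) • u = K.ψ (t + 1) • K.ψ (t + 2) • K.ψ t • K.ψ (t + 1) • u := by
  simp only [psiBig_succ, mul_smul]

lemma commute_psiBig {K : KLR A n} {a : A} {s : ℕ}
    (h : ∀ r, s ≤ r + 1 → r ≤ s + 1 → Commute a (K.ψ r)) : Commute a (PsiBig K s) := by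
  unfold PsiBig
  refine (((h s ?_ ?_).mul_right (h (s + 1) ?_ ?_)).mul_right (h (s - 1) ?_ ?_)).mul_right
    (h s ?_ ?_) <;> omega

lemma commute_ascWord_psi (K : KLR A n) (x y s : ℕ) (hx : 1 ≤ x := by omega)
    (hyn : y + 1 ≤ n := by omega) (hs : 1 ≤ s := by omega) (hsn : s + 1 ≤ n := by omega)
    (h : y + 2 ≤ s ∨ s + 2 ≤ x := by omega) : Commute (ascWord K x y) (K.ψ s) :=
  (commute_ascWord fun r _ _ => K.commute_psi_psi s r).symm

lemma commute_ascWord_psiBig (K : KLR A n) (x y i : ℕ) (hx : 1 ≤ x := by omega)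
    (hyn : y + 1 ≤ n := by omega) (hi : 2 ≤ i := by omega) (hin : i + 2 ≤ n := by omega)
    (h : y + 3 ≤ i ∨ i + 3 ≤ x := by omega) : Commute (ascWord K x y) (PsiBig K i) :=
  commute_psiBig fun s _ _ => K.commute_ascWord_psi x y s

lemma commute_ascWord_ascWord (K : KLR A n) (x y x' y' : ℕ) (hx : 1 ≤ x := by omega)
    (hyn : y + 1 ≤ n := by omega) (hyn' : y' + 1 ≤ n := by omega)
    (h : y + 2 ≤ x' := by omega) : Commute (ascWord K x y) (ascWord K x' y') :=
  commute_ascWord fun s _ _ => K.commute_ascWord_psi x y s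

lemma ascWord_mul_psiBig_add_two (K : KLR A n) {x j : ℕ} (hx : 1 ≤ x) (hxj : x ≤ j + 1)
    (hjn : j + 4 ≤ n) :
    ascWord K x j * PsiBig K (j + 2) = K.ψ (j + 2) * K.ψ (j + 3) * ascWord K x (j + 2) := by
  rw [show PsiBig K (j + 2) = PsiBig K (j + 1 + 1) from rfl, psiBig_succ,
    ascWord_succ K (by omega), ascWord_succ K hxj]
  simp only [add_assoc, Nat.reduceAdd, ← mul_assoc]
  rw [(K.commute_ascWord_psi x j (j + 2)).eq, mul_assoc (K.ψ (j + 2)),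
    (K.commute_ascWord_psi x j (j + 3)).eq, ← mul_assoc]

def HasResidue (K : KLR A n) (κ : ℕ → ZMod 2) (u : M) : Prop := K.e κ • u = u

namespace HasResidue

variable {K : KLR A n} {κ : ℕ → ZMod 2} {u : M}

lemma smul_eq_mul_e_smul (h : K.HasResidue κ u) (a : A) : a • u = (a * K.e κ) • u := by
  rw [mul_smul, show K.e κ • u = u from h]

lemma psi_smul (h : K.HasResidue κ u) (r : ℕ) (hr : 1 ≤ r := by omega)
    (hrn : r + 1 ≤ n := by omega) : K.HasResidue (swapSeq r κ) (K.ψ r • u) := by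
  rw [HasResidue, h.smul_eq_mul_e_smul, smul_smul, ← mul_assoc, ← K.psi_e r κ hr hrn,
    mul_assoc, K.e_idem]

lemma y_smul (h : K.HasResidue κ u) (s : ℕ) (hs : 1 ≤ s := by omega)
    (hsn : s ≤ n := by omega) : K.HasResidue κ (K.y s • u) := by
  rw [HasResidue, h.smul_eq_mul_e_smul, smul_smul, ← mul_assoc, ← K.y_e s κ hs hsn,
    mul_assoc, K.e_idem]

lemma psi_psi_smul_of_eq (h : K.HasResidue κ u) (r : ℕ) (hr : 1 ≤ r := by omega)
    (hrn : r + 1 ≤ n := by omega) (hres : κ r = κ (r + 1)) : K.ψ r • K.ψ r • u = 0 := by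
  rw [smul_smul, h.smul_eq_mul_e_smul, K.psi_sq_same r κ hr hrn hres, zero_smul]

lemma psi_psi_smul_of_ne (h : K.HasResidue κ u) (r : ℕ) (hr : 1 ≤ r := by omega)
    (hrn : r + 1 ≤ n := by omega) (hres : κ r ≠ κ (r + 1)) :
    K.ψ r • K.ψ r • u = -((K.y r - K.y (r + 1)) ^ 2) • u := by
  rw [smul_smul, h.smul_eq_mul_e_smul, K.psi_sq_diff r κ hr hrn hres, ← h.smul_eq_mul_e_smul]

lemma braid_smul_of_eq (h : K.HasResidue κ u) (r : ℕ) (hr : 1 ≤ r := by omega)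
    (hrn : r + 2 ≤ n := by omega) (hres : κ r = κ (r + 1) ∨ κ (r + 1) = κ (r + 2)) :
    K.ψ r • K.ψ (r + 1) • K.ψ r • u = K.ψ (r + 1) • K.ψ r • K.ψ (r + 1) • u := by
  rw [smul_smul, smul_smul, h.smul_eq_mul_e_smul, K.braid_same r κ hr hrn hres,
    ← h.smul_eq_mul_e_smul, mul_smul, mul_smul]

lemma braid_smul_of_ne (h : K.HasResidue κ u) (r : ℕ) (hr : 1 ≤ r := by omega)
    (hrn : r + 2 ≤ n := by omega) (hres : κ r ≠ κ (r + 1))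
    (hres' : κ (r + 1) ≠ κ (r + 2)) :
    K.ψ r • K.ψ (r + 1) • K.ψ r • u =
      K.ψ (r + 1) • K.ψ r • K.ψ (r + 1) • u + K.y r • u - (2 : A) • K.y (r + 1) • u +
        K.y (r + 2) • u := by
  rw [smul_smul, smul_smul, h.smul_eq_mul_e_smul, K.braid_diff r κ hr hrn hres hres',
    ← h.smul_eq_mul_e_smul]
  simp only [add_smul, sub_smul, mul_smul]

lemma y_psi_smul_of_eq (h : K.HasResidue κ u) (r : ℕ) (hr : 1 ≤ r := by omega)
    (hrn : r + 1 ≤ n := by omega) (hres : κ r = κ (r + 1)) :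
    K.y r • K.ψ r • u = K.ψ r • K.y (r + 1) • u - u := by
  rw [smul_smul, h.smul_eq_mul_e_smul, K.y_psi_same r κ hr hrn hres, ← h.smul_eq_mul_e_smul,
    sub_smul, one_smul, mul_smul]

lemma y_psi_smul_of_ne (h : K.HasResidue κ u) (r : ℕ) (hr : 1 ≤ r := by omega)
    (hrn : r + 1 ≤ n := by omega) (hres : κ r ≠ κ (r + 1)) :
    K.y r • K.ψ r • u = K.ψ r • K.y (r + 1) • u := by
  rw [smul_smul, h.smul_eq_mul_e_smul, K.y_psi_diff r κ hr hrn hres, ← h.smul_eq_mul_e_smul,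
    mul_smul]

lemma y_succ_psi_smul_of_eq (h : K.HasResidue κ u) (r : ℕ) (hr : 1 ≤ r := by omega)
    (hrn : r + 1 ≤ n := by omega) (hres : κ r = κ (r + 1)) :
    K.y (r + 1) • K.ψ r • u = K.ψ r • K.y r • u + u := by
  rw [smul_smul, h.smul_eq_mul_e_smul, K.y_psi_same' r κ hr hrn hres, ← h.smul_eq_mul_e_smul,
    add_smul, one_smul, mul_smul]

lemma y_succ_psi_smul_of_ne (h : K.HasResidue κ u) (r : ℕ) (hr : 1 ≤ r := by omega)
    (hrn : r + 1 ≤ n := by omega) (hres : κ r ≠ κ (r + 1)) :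
    K.y (r + 1) • K.ψ r • u = K.ψ r • K.y r • u := by
  rw [smul_smul, h.smul_eq_mul_e_smul, K.y_psi_diff' r κ hr hrn hres, ← h.smul_eq_mul_e_smul,
    mul_smul]

lemma ascWord_smul_psiBig_smul (hu : K.HasResidue κ u) {d : ℕ} (hdn : d + 5 ≤ n)
    (h₁ : κ (d + 1) = 1) (h₂ : κ (d + 2) = 0) (h₃ : κ (d + 3) = 1) (h₄ : κ (d + 4) = 0)
    (h₅ : κ (d + 5) = 1) (hy : K.y (d + 1) • u = 0) :
    ascWord K (d + 1) (d + 4) • PsiBig K (d + 2) • u =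
      PsiBig K (d + 3) • ascWord K (d + 1) (d + 4) • u +
        K.ψ (d + 4) • K.ψ (d + 3) • ascWord K (d + 1) (d + 2) • u := by
  have hW := ((hu.psi_smul (d + 2)).psi_smul (d + 3)).psi_smul (d + 4)
  have hX := hW.psi_smul (d + 1)
  -- the `y_{d+3}` and `y_{d+4}` terms of the braid relation die against `ψ_{d+1}²`
  have hvanish : ∀ s, d + 3 ≤ s → s ≤ d + 4 → K.ψ (d + 1) • K.y s •
      K.ψ (d + 1) • K.ψ (d + 4) • K.ψ (d + 3) • K.ψ (d + 2) • u = 0 :=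
    fun s _ _ => by
      rw [(K.commute_y_psi s (d + 1)).smul_smul_comm, (hW.y_smul s).psi_psi_smul_of_eq (d + 1)
        (hres := by simp +decide [swapSeq, add_assoc, h₁, h₃])]
  have hy₂ :
      K.y (d + 2) • K.ψ (d + 1) • K.ψ (d + 4) • K.ψ (d + 3) • K.ψ (d + 2) • u =
      K.ψ (d + 4) • K.ψ (d + 3) • K.ψ (d + 2) • u := by
    rw [hW.y_succ_psi_smul_of_eq (d + 1)
        (hres := by simp +decide [swapSeq, add_assoc, h₁, h₃]),
      (K.commute_y_psi (d + 1) (d + 4)).smul_smul_comm,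
      (K.commute_y_psi (d + 1) (d + 3)).smul_smul_comm,
      (K.commute_y_psi (d + 1) (d + 2)).smul_smul_comm, hy, smul_zero, smul_zero, smul_zero,
      smul_zero, zero_add]
  have hbraid : K.ψ (d + 1) • K.ψ (d + 3) • K.ψ (d + 2) • K.ψ (d + 3) • K.ψ (d + 1) •
      K.ψ (d + 4) • K.ψ (d + 3) • K.ψ (d + 2) • u =
      PsiBig K (d + 3) • K.ψ (d + 1) • K.ψ (d + 2) • K.ψ (d + 3) • K.ψ (d + 4) • u := by
    rw [show PsiBig K (d + 3) = PsiBig K (d + 2 + 1) from rfl, psiBig_succ_smul]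
    conv_lhs =>
      rw [(K.commute_psi_psi (d + 3) (d + 1)).smul_smul_comm,
        (hu.psi_smul (d + 2)).braid_smul_of_eq (d + 3)
          (hres := Or.inl (by simp +decide [swapSeq, add_assoc, h₂, h₄])),
        (K.commute_psi_psi (d + 4) (d + 2)).smul_smul_comm,
        (K.commute_psi_psi (d + 1) (d + 4)).smul_smul_comm,
        (K.commute_psi_psi (d + 2) (d + 4)).smul_smul_comm,
        (K.commute_psi_psi (d + 1) (d + 3)).smul_smul_comm,
        (K.commute_psi_psi (d + 1) (d + 4)).smul_smul_comm,
        (((hu.psi_smul (d + 4)).psi_smul (d + 2)).psi_smul (d + 3)).braid_smul_of_eq (d + 1)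
          (hres := Or.inl (by simp +decide [swapSeq, add_assoc, h₁, h₃])),
        (hu.psi_smul (d + 4)).braid_smul_of_eq (d + 2)
          (hres := Or.inr (by simp +decide [swapSeq, add_assoc, h₃, h₅])),
        (K.commute_psi_psi (d + 1) (d + 3)).smul_smul_comm]
  rw [ascWord_four, ascWord_two]
  simp only [mul_smul]
  rw [show PsiBig K (d + 2) = PsiBig K (d + 1 + 1) from rfl, psiBig_succ_smul,
    (K.commute_psi_psi (d + 4) (d + 2)).smul_smul_comm,
    (K.commute_psi_psi (d + 3) (d + 1)).smul_smul_comm,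
    (K.commute_psi_psi (d + 4) (d + 1)).smul_smul_comm,
    hX.braid_smul_of_ne (d + 2) (hres := by simp +decide [swapSeq, add_assoc, h₁, h₄])
      (hres' := by simp +decide [swapSeq, add_assoc, h₄, h₅])]
  simp only [add_assoc, Nat.reduceAdd]
  rw [smul_add, smul_sub, smul_add, hy₂,
    (Commute.ofNat_left 2 (K.ψ (d + 1))).symm.smul_smul_comm, hvanish (d + 3) le_rfl (by omega),
    hvanish (d + 4) (by omega) le_rfl, smul_zero, sub_zero,
    add_zero, hbraid]

lemma exists_ascWord_smul (h : K.HasResidue κ u) {x y : ℕ} (hx : 1 ≤ x) (hxy : x ≤ y + 1)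
    (hyn : y + 1 ≤ n) :
    ∃ κ', K.HasResidue κ' (ascWord K x y • u) ∧ κ' x = κ (y + 1) ∧
      ∀ k < x, κ' k = κ k := by
  induction y, (show x - 1 ≤ y by omega) using Nat.le_induction generalizing κ u with
  | base =>
    refine ⟨κ, by rwa [ascWord_of_lt K (by omega), one_smul], by rw [Nat.sub_add_cancel hx],
      fun _ _ => rfl⟩
  | succ y hy ih =>
    obtain ⟨κ', hκ', hx', hlt⟩ := ih (h.psi_smul (y + 1)) (by omega) (by omega)
    refine ⟨κ', by rwa [ascWord_succ K (by omega), mul_smul], ?_, fun k hk => ?_⟩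
    · rw [hx']
      simp [swapSeq]
    · rw [hlt k hk]
      simp [swapSeq, show k ≠ y + 1 by omega, show k ≠ y + 2 by omega]

end HasResidue

structure IsDominoVector (K : KLR A n) (u : M) : Prop where
  hasResidue : K.HasResidue (fun k => (k : ZMod 2) + 1) u
  y_smul : ∀ k, 1 ≤ k → k ≤ n → K.y k • u = 0
  psi_smul_of_even : ∀ r, 1 ≤ r → r + 1 ≤ n → Even r → K.ψ r • u = 0

namespace IsDominoVector

variable {K : KLR A n} {u : M}

lemma braid_smul (h : K.IsDominoVector u) (r : ℕ) (hr : 1 ≤ r) (hrn : r + 2 ≤ n) :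
    K.ψ r • K.ψ (r + 1) • K.ψ r • u = K.ψ (r + 1) • K.ψ r • K.ψ (r + 1) • u := by
  rw [h.hasResidue.braid_smul_of_ne r hr hrn (by simp +decide) (by simp +decide),
    h.y_smul r hr (by omega), h.y_smul (r + 1) (by omega) (by omega),
    h.y_smul (r + 2) (by omega) hrn]
  simp

lemma braid_smul_eq_zero_of_even (h : K.IsDominoVector u) {t : ℕ} (hte : Even t) (ht : 1 ≤ t)
    (htn : t + 2 ≤ n) : K.ψ (t + 1) • K.ψ t • K.ψ (t + 1) • u = 0 := by
  rw [← h.braid_smul t ht htn, h.psi_smul_of_even t ht (by omega) hte, smul_zero, smul_zero]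

lemma braid_smul_eq_zero_of_odd (h : K.IsDominoVector u) {t : ℕ} (hto : Odd t)
    (htn : t + 2 ≤ n) : K.ψ t • K.ψ (t + 1) • K.ψ t • u = 0 := by
  rw [h.braid_smul t hto.pos htn, h.psi_smul_of_even (t + 1) (by omega) (by omega) hto.add_one,
    smul_zero, smul_zero]

lemma psi_smul_psiBig_smul (h : K.IsDominoVector u) {t : ℕ} (hte : Even t) (ht : 1 ≤ t)
    (htn : t + 3 ≤ n) (r : ℕ) (hr : 1 ≤ r) (hrn : r + 1 ≤ n) (hre : Even r) :
    K.ψ r • PsiBig K (t + 1) • u = 0 := by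
  obtain rfl | rfl | hfar : t = r ∨ r = t + 2 ∨ (r + 2 ≤ t ∨ t + 4 ≤ r) := by
    obtain ⟨c, rfl⟩ := hte; obtain ⟨c', rfl⟩ := hre; omega
  · rw [psiBig_succ_smul, (K.commute_psi_psi (t + 2) t).smul_smul_comm,
      ((h.hasResidue.psi_smul (t + 1)).psi_smul (t + 2)).braid_smul_of_eq t
        (hres := Or.inl (by simp +decide [swapSeq, add_assoc])),
      h.braid_smul_eq_zero_of_odd hte.add_one (by omega), smul_zero, smul_zero]
  · rw [psiBig_succ_smul,
      ← ((h.hasResidue.psi_smul (t + 1)).psi_smul t).braid_smul_of_eq (t + 1)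
        (hres := Or.inr (by simp +decide [swapSeq, add_assoc])),
      h.braid_smul_eq_zero_of_even hte ht (by omega), smul_zero, smul_zero]
  · rw [(commute_psiBig fun s _ _ => K.commute_psi_psi r s).smul_smul_comm,
      h.psi_smul_of_even r hr hrn hre, smul_zero]

lemma y_smul_psiBig_smul (h : K.IsDominoVector u) {t : ℕ} (hte : Even t) (ht : 1 ≤ t)
    (htn : t + 3 ≤ n) (k : ℕ) (hk : 1 ≤ k) (hkn : k ≤ n) :
    K.y k • PsiBig K (t + 1) • u = 0 := by
  have h₁ := h.hasResidue.psi_smul (t + 1)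
  have h₂ := h₁.psi_smul t
  have h₃ := h₂.psi_smul (t + 2)
  have hy := h.y_smul
  rw [psiBig_succ_smul]
  obtain rfl | rfl | rfl | rfl | hfar :
      t = k ∨ k = t + 1 ∨ k = t + 2 ∨ k = t + 3 ∨ (k < t ∨ t + 3 < k) := by omega
  · rw [(K.commute_y_psi t (t + 1)).smul_smul_comm, (K.commute_y_psi t (t + 2)).smul_smul_comm,
      h₁.y_psi_smul_of_eq t (hres := by simp +decide [swapSeq, add_assoc]),
      h.hasResidue.y_psi_smul_of_ne (t + 1) (hres := by simp +decide),
      hy (t + 2) (by omega) (by omega), smul_zero, smul_zero, zero_sub, smul_neg, smul_neg,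
      h.braid_smul_eq_zero_of_odd hte.add_one (by omega), neg_zero]
  · rw [h₃.y_psi_smul_of_ne (t + 1) (hres := by simp +decide [swapSeq, add_assoc]),
      h₂.y_psi_smul_of_eq (t + 2) (hres := by simp +decide [swapSeq, add_assoc]),
      (K.commute_y_psi (t + 3) t).smul_smul_comm,
      (K.commute_y_psi (t + 3) (t + 1)).smul_smul_comm,
      hy (t + 3) (by omega) (by omega), smul_zero, smul_zero, smul_zero, zero_sub, smul_neg,
      h.braid_smul_eq_zero_of_even hte ht (by omega), neg_zero]
  · rw [h₃.y_succ_psi_smul_of_ne (t + 1) (hres := by simp +decide [swapSeq, add_assoc]),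
      (K.commute_y_psi (t + 1) (t + 2)).smul_smul_comm,
      h₁.y_succ_psi_smul_of_eq t (hres := by simp +decide [swapSeq, add_assoc]),
      (K.commute_y_psi t (t + 1)).smul_smul_comm, hy t ht (by omega), smul_zero, smul_zero,
      zero_add, h.braid_smul_eq_zero_of_odd hte.add_one (by omega)]
  · rw [(K.commute_y_psi (t + 3) (t + 1)).smul_smul_comm,
      h₂.y_succ_psi_smul_of_eq (t + 2) (hres := by simp +decide [swapSeq, add_assoc]),
      (K.commute_y_psi (t + 2) t).smul_smul_comm,
      h.hasResidue.y_succ_psi_smul_of_ne (t + 1) (hres := by simp +decide),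
      hy (t + 1) (by omega) (by omega), smul_zero, smul_zero, smul_zero, zero_add,
      h.braid_smul_eq_zero_of_even hte ht (by omega)]
  · rw [← psiBig_succ_smul, (commute_psiBig fun r _ _ => K.commute_y_psi k r).smul_smul_comm,
      hy k hk hkn, smul_zero]

lemma hasResidue_psiBig_smul (h : K.IsDominoVector u) {t : ℕ} (ht : 1 ≤ t) (htn : t + 3 ≤ n) :
    K.HasResidue (fun k => (k : ZMod 2) + 1) (PsiBig K (t + 1) • u) := by
  have key := (((h.hasResidue.psi_smul (t + 1)).psi_smul t).psi_smul (t + 2)).psi_smul (t + 1)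
  rwa [← psiBig_succ_smul, swapSeq_psiBig_eq_self (by simp +decide [add_assoc])
    (by simp +decide [add_assoc])] at key

lemma psiBig_smul (h : K.IsDominoVector u) {s : ℕ} (hs : Odd s) (hs3 : 3 ≤ s)
    (hsn : s + 2 ≤ n) : K.IsDominoVector (PsiBig K s • u) := by
  obtain ⟨t, rfl⟩ : ∃ t, s = t + 1 := ⟨s - 1, by omega⟩
  have hte : Even t := by simpa [Nat.odd_add_one] using hs
  exact ⟨h.hasResidue_psiBig_smul (by omega) (by omega),
    h.y_smul_psiBig_smul hte (by omega) (by omega),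
    h.psi_smul_psiBig_smul hte (by omega) (by omega)⟩

lemma list_prod_psiBig_smul (h : K.IsDominoVector u) :
    ∀ {l : List ℕ}, (∀ s ∈ l, Odd s ∧ 3 ≤ s ∧ s + 2 ≤ n) →
      K.IsDominoVector ((l.map (PsiBig K)).prod • u)
  | [], _ => by simpa
  | s :: l, hl => by
    obtain ⟨hs, hs3, hsn⟩ := hl s List.mem_cons_self
    rw [List.map_cons, List.prod_cons, mul_smul]
    exact (h.list_prod_psiBig_smul fun s' hs' => hl s' (List.mem_cons_of_mem s hs')).psiBig_smul
      hs hs3 hsn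

lemma chainD_smul (h : K.IsDominoVector u) {x y : ℕ} (hx : Odd x) (hxn : x + 2 ≤ n) (hy : Odd y)
    (hy3 : 3 ≤ y) : K.IsDominoVector (chainD K x y • u) := by
  have hchain := h.list_prod_psiBig_smul (l := (List.range ((x + 2 - y) / 2)).map (x - 2 * ·))
  rw [List.map_map] at hchain
  refine hchain fun s hs => ?_
  obtain ⟨k, hk, rfl⟩ := List.mem_map.1 hs
  obtain ⟨a, rfl⟩ := hx
  obtain ⟨c, rfl⟩ := hy
  rw [List.mem_range] at hk
  exact ⟨⟨a - k, by omega⟩, by omega, by omega⟩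

lemma normProd_smul (h : K.IsDominoVector u) {p : List ℕ} {base : ℕ} (hbase : Odd base)
    (hbase3 : 3 ≤ base) (hp : ∀ j ∈ p, Odd j ∧ j + 2 ≤ n) :
    K.IsDominoVector (normProd K base p • u) := by
  induction p generalizing base with
  | nil => simpa [normProd]
  | cons j p ih =>
    obtain ⟨hj, hjn⟩ := hp j List.mem_cons_self
    rw [normProd, mul_smul]
    exact (ih (by simpa [Nat.odd_add] using hbase) (by omega)
      fun j' hj' => hp j' (List.mem_cons_of_mem j hj')).chainD_smul hj hjn hbase hbase3

lemma psi_smul_psiBig_smul_self (h : K.IsDominoVector u) {t : ℕ} (ht : 1 ≤ t)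
    (htn : t + 3 ≤ n) :
    K.ψ (t + 1) • PsiBig K (t + 1) • u = (-2 : ℤ) • K.ψ (t + 1) • u := by
  have h₁ := h.hasResidue.psi_smul (t + 1)
  have h₂ := h₁.psi_smul t
  have hy := h.y_smul
  have hD₂ : (K.y (t + 1) - K.y (t + 2)) • K.ψ (t + 2) • K.ψ (t + 1) • u =
      K.ψ (t + 1) • u := by
    rw [sub_smul, (K.commute_y_psi (t + 1) (t + 2)).smul_smul_comm,
      h.hasResidue.y_psi_smul_of_ne (t + 1) (hres := by simp +decide),
      h₁.y_psi_smul_of_eq (t + 2) (hres := by simp +decide [swapSeq, add_assoc]),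
      (K.commute_y_psi (t + 3) (t + 1)).smul_smul_comm, hy (t + 2) (by omega) (by omega),
      hy (t + 3) (by omega) (by omega)]
    simp
  have hD₀ : (K.y (t + 1) - K.y (t + 2)) • K.ψ t • K.ψ (t + 1) • u =
      K.ψ (t + 1) • u := by
    rw [sub_smul, h₁.y_succ_psi_smul_of_eq t (hres := by simp +decide [swapSeq, add_assoc]),
      (K.commute_y_psi t (t + 1)).smul_smul_comm, (K.commute_y_psi (t + 2) t).smul_smul_comm,
      h.hasResidue.y_succ_psi_smul_of_ne (t + 1) (hres := by simp +decide),
      hy t ht (by omega), hy (t + 1) (by omega) (by omega)]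
    simp
  have hD₃ : (K.y (t + 1) - K.y (t + 2)) • K.ψ (t + 2) • K.ψ t • K.ψ (t + 1) • u =
      K.ψ (t + 2) • K.ψ (t + 1) • u + K.ψ t • K.ψ (t + 1) • u := by
    rw [sub_smul, (K.commute_y_psi (t + 1) (t + 2)).smul_smul_comm,
      h₁.y_succ_psi_smul_of_eq t (hres := by simp +decide [swapSeq, add_assoc]),
      (K.commute_y_psi t (t + 1)).smul_smul_comm,
      h₂.y_psi_smul_of_eq (t + 2) (hres := by simp +decide [swapSeq, add_assoc]),
      (K.commute_y_psi (t + 3) t).smul_smul_comm,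
      (K.commute_y_psi (t + 3) (t + 1)).smul_smul_comm, hy t ht (by omega),
      hy (t + 3) (by omega) (by omega)]
    simp
  rw [psiBig_succ_smul, (h₂.psi_smul (t + 2)).psi_psi_smul_of_ne (t + 1)
      (hres := by simp +decide [swapSeq, add_assoc]),
    neg_smul, sq, mul_smul, hD₃, smul_add, hD₂, hD₀]
  abel

lemma ascWord_smul_psiBig_smul_of_lt (h : K.IsDominoVector u) {i j : ℕ} (hi : Odd i)
    (hi3 : 3 ≤ i) (hij : i + 2 ≤ j) (hj : Odd j) (hjn : j + 2 ≤ n) :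
    ascWord K 1 j • PsiBig K i • u =
      PsiBig K (i + 1) • ascWord K 1 j • u +
        (K.ψ (i + 2) * K.ψ (i + 1) * ascWord K (i + 3) j) • ascWord K 1 i • u := by
  obtain ⟨d, rfl⟩ : ∃ d, i = d + 2 := ⟨i - 2, by omega⟩
  simp only [add_assoc, Nat.reduceAdd]
  have hd : (d : ZMod 2) = 1 :=
    (ZMod.natCast_eq_one_iff_odd).2 (by simpa [Nat.odd_add] using hi)
  have hj1 : (j : ZMod 2) = 1 := (ZMod.natCast_eq_one_iff_odd).2 hj
  obtain ⟨κ, hκ, hκx, hκlt⟩ := h.hasResidue.exists_ascWord_smul (x := d + 5) (y := j)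
    (by omega) (by omega) (by omega)
  have hy : K.y (d + 1) • ascWord K (d + 5) j • u = 0 := by
    rw [(commute_ascWord fun r _ _ => K.commute_y_psi (d + 1) r).smul_smul_comm,
      h.y_smul (d + 1) (by omega) (by omega), smul_zero]
  have hlocal := hκ.ascWord_smul_psiBig_smul (by omega)
    (by simp +decide [hκlt, hd]) (by simp +decide [hκlt, hd]) (by simp +decide [hκlt, hd])
    (by simp +decide [hκlt, hd]) (by simp +decide [hκx, hj1]) hy
  rw [ascWord_append K (m := d + 4) (by omega) (by omega),
    ascWord_append K (x := 1) (m := d) (y := d + 4) (by omega) (by omega),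
    ascWord_append K (x := 1) (m := d) (y := d + 2) (by omega) (by omega)]
  simp only [mul_smul]
  rw [(K.commute_ascWord_psiBig (d + 5) j (d + 2)).smul_smul_comm, hlocal, smul_add,
    (K.commute_ascWord_psiBig 1 d (d + 3)).smul_smul_comm,
    (K.commute_ascWord_psi 1 d (d + 4)).smul_smul_comm,
    (K.commute_ascWord_psi 1 d (d + 3)).smul_smul_comm,
    (K.commute_ascWord_ascWord (d + 1) (d + 2) (d + 5) j).smul_smul_comm,
    (K.commute_ascWord_ascWord 1 d (d + 5) j).smul_smul_comm]

end IsDominoVector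

end KLR

theorem specht_hook_domino_garnir_commutation_general {M : Type*} [AddCommGroup M] [Module A M]
    (b : ℕ) (hb : Even b)
    (K : KLR A n) (z : M)
    (hy : ∀ k, 1 ≤ k → k ≤ n → K.y k • z = 0)
    (he1 : K.e (iLamGen b) • z = z)
    (hpsiz : ∀ j, 1 ≤ j → j + 1 ≤ n → j ≠ b + 1 → K.ψ j • z = 0)
    (p : List ℕ) (hp : NormOK n b p)
    (v : M) (hv : v = normProd K (b + 3 - 2 * p.length) p • z)
    (j : ℕ) (hjodd : Odd j) (hj3 : 3 ≤ j) (hjn : j + 2 ≤ n) :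
    (∀ i, Odd i → j + 4 ≤ i → i + 2 ≤ n →
        ascWord K 1 j • (PsiBig K i • v) = PsiBig K i • (ascWord K 1 j • v)) ∧
    (j + 4 ≤ n → ascWord K 1 j • (PsiBig K (j + 2) • v) =
        (K.ψ (j + 2) * K.ψ (j + 3)) • (ascWord K 1 (j + 2) • v)) ∧
    (ascWord K 1 j • (PsiBig K j • v) = (-2 : ℤ) • (ascWord K 1 j • v)) ∧
    (5 ≤ j → ascWord K 1 j • (PsiBig K (j - 2) • v) =
        PsiBig K (j - 1) • (ascWord K 1 j • v) +
          (K.ψ j * K.ψ (j - 1)) • (ascWord K 1 (j - 2) • v)) ∧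
    (∀ i, Odd i → 3 ≤ i → i + 4 ≤ j →
        ascWord K 1 j • (PsiBig K i • v) =
          PsiBig K (i + 1) • (ascWord K 1 j • v) +
            (K.ψ (i + 2) * K.ψ (i + 1) * ascWord K (i + 3) j) • (ascWord K 1 i • v)) := by
  have hz : K.IsDominoVector z := by
    refine ⟨?_, hy, fun r hr hrn hre => hpsiz r hr hrn ?_⟩
    · rwa [KLR.HasResidue, ← funext (KLR.iLamGen_of_even hb)]
    · rintro rfl
      exact Nat.not_even_iff_odd.2 hb.add_one hre
  obtain ⟨hlen, -, hentries⟩ := hp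
  have hbase : Odd (b + 3 - 2 * p.length) := by
    obtain ⟨c, hc⟩ := hb
    exact ⟨c - p.length + 1, by omega⟩
  have hvT : K.IsDominoVector v := hv ▸ hz.normProd_smul hbase (by omega) fun j hj => by
    obtain ⟨⟨k, hk⟩, rfl⟩ := List.mem_iff_get.1 hj
    exact ⟨(hentries k hk).1, (hentries k hk).2.2⟩
  refine ⟨fun i _ _ _ => ?_, fun _ => ?_, ?_, fun _ => ?_, fun i hi hi3 hij =>
    hvT.ascWord_smul_psiBig_smul_of_lt hi hi3 (by omega) hjodd hjn⟩
  · rw [(K.commute_ascWord_psiBig 1 j i).smul_smul_comm]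
  · rw [smul_smul, K.ascWord_mul_psiBig_add_two le_rfl (by omega) (by omega), mul_smul]
  · obtain ⟨t, rfl⟩ : ∃ t, j = t + 1 := ⟨j - 1, by omega⟩
    rw [K.ascWord_succ (by omega), mul_smul, mul_smul, hvT.psi_smul_psiBig_smul_self (by omega)
      (by omega), smul_comm]
  · obtain ⟨i, rfl⟩ : ∃ i, j = i + 2 := ⟨j - 2, by omega⟩
    have := hvT.ascWord_smul_psiBig_smul_of_lt (by simpa [Nat.odd_add] using hjodd) (by omega)
      le_rfl hjodd hjn
    rwa [K.ascWord_of_lt (x := i + 3) (y := i + 2) (by omega), mul_one] at this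

/-- `e = 2`, `λ = (a, 1^b)` with `b` even, `T` a domino tableau with basis
vector `v_T` (in normal form, given by the data `p`).  For odd `j` with `3 ≤ j ≤ n - 2`,
writing `ψ_1 ⋯ ψ_j = ascWord K 1 j`:
(1) `ψ_1⋯ψ_j Ψ_i v_T = Ψ_i ψ_1⋯ψ_j v_T` for odd `i` with `j + 4 ≤ i ≤ n - 2`;
(2) `ψ_1⋯ψ_j Ψ_{j+2} v_T = ψ_{j+2} ψ_{j+3} ψ_1⋯ψ_{j+2} v_T`;
(3) `ψ_1⋯ψ_j Ψ_j v_T = -2 ψ_1⋯ψ_j v_T`;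
(4) `ψ_1⋯ψ_j Ψ_{j-2} v_T = Ψ_{j-1} ψ_1⋯ψ_j v_T + ψ_j ψ_{j-1} ψ_1⋯ψ_{j-2} v_T`;
(5) for odd `i` with `3 ≤ i ≤ j - 4`,
`ψ_1⋯ψ_j Ψ_i v_T = Ψ_{i+1} ψ_1⋯ψ_j v_T + ψ_{i+2} ψ_{i+1} ψ_{i+3} ψ_{i+4}⋯ψ_j ψ_1⋯ψ_i v_T`. -/
theorem specht_hook_domino_garnir_commutation {M : Type*} [AddCommGroup M] [Module A M]
    (a b : ℕ) (hn : n = a + b) (ha : 1 ≤ a) (hb : Even b)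
    (K : KLR A n) (z : M)
    (hy : ∀ k, 1 ≤ k → k ≤ n → K.y k • z = 0)
    (he1 : K.e (iLamGen b) • z = z)
    (he2 : ∀ i, i ≠ iLamGen b → K.e i • z = 0)
    (hpsiz : ∀ j, 1 ≤ j → j + 1 ≤ n → j ≠ b + 1 → K.ψ j • z = 0)
    (hgar : ascWord K 1 (b + 1) • z = 0)
    (p : List ℕ) (hp : NormOK n b p)
    (v : M) (hv : v = normProd K (b + 3 - 2 * p.length) p • z)
    (j : ℕ) (hjodd : Odd j) (hj3 : 3 ≤ j) (hjn : j + 2 ≤ n) :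
    (∀ i, Odd i → j + 4 ≤ i → i + 2 ≤ n →
        ascWord K 1 j • (PsiBig K i • v) = PsiBig K i • (ascWord K 1 j • v)) ∧
    (j + 4 ≤ n → ascWord K 1 j • (PsiBig K (j + 2) • v) =
        (K.ψ (j + 2) * K.ψ (j + 3)) • (ascWord K 1 (j + 2) • v)) ∧
    (ascWord K 1 j • (PsiBig K j • v) = (-2 : ℤ) • (ascWord K 1 j • v)) ∧
    (5 ≤ j → ascWord K 1 j • (PsiBig K (j - 2) • v) =
        PsiBig K (j - 1) • (ascWord K 1 j • v) +
          (K.ψ j * K.ψ (j - 1)) • (ascWord K 1 (j - 2) • v)) ∧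
    (∀ i, Odd i → 3 ≤ i → i + 4 ≤ j →
        ascWord K 1 j • (PsiBig K i • v) =
          PsiBig K (i + 1) • (ascWord K 1 j • v) +
            (K.ψ (i + 2) * K.ψ (i + 1) * ascWord K (i + 3) j) • (ascWord K 1 i • v)) :=
  specht_hook_domino_garnir_commutation_general b hb K z hy he1 hpsiz p hp v hv j hjodd hj3 hjn
end

section
/- Let e = 2, a = 2r+1, b = 2, λ = (a,1^2), and let f ∈ End_H(S_λ) be given by f(z) = Σ_{c=1}^{r} c · Ψ↓(3+2(r−c), 3) z. Then f² = −(r+1) f, i.e., f²(z) = −(r+1) f(z). -/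
open scoped BigOperators

variable {A : Type*} [Ring A] {n : ℕ}

/-! Since `z` generates `S_λ` and `f` is `A`-linear, it suffices to show `f (f z) = -(r+1) f z`.
Every summand `Ψ↓(3 + 2(r-c), 3) z` of `f z` ends in `Ψ_3 z`, so `f (f z)` is governed by
`Ψ_3 (f z)`. Tracking residue sequences through the KLR relations gives `Ψ_3 Ψ_3 z = -2 Ψ_3 z`
(from `ψ_3² = -(y_3 - y_4)²`) and `Ψ_3 Ψ_5 Ψ_3 z = Ψ_3 z` (from two braid relations), while for
longer chains `Ψ_3` commutes with `Ψ↓(7 + 2m, 7)`, whose last factor `Ψ_7` kills `z`. Hence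
`Ψ_3 (f z) = (-2r + (r-1)) Ψ_3 z = -(r+1) Ψ_3 z`. -/

theorem swapSeq_of_eq {r : ℕ} {i : ℕ → ZMod 2} (h : i r = i (r + 1)) : swapSeq r i = i := by
  funext k
  unfold swapSeq
  split_ifs with h1 h2 <;> subst_vars <;> simp [h]

namespace KLR

variable {M : Type*} [AddCommGroup M] [Module A M] (K : KLR A n) {i : ℕ → ZMod 2} {v : M}

theorem smul_eq_smul_of_mul_e {X Y : A} (hv : K.e i • v = v) (h : X * K.e i = Y * K.e i) :
    X • v = Y • v := by
  rw [← hv, ← mul_smul, h, mul_smul]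

theorem e_swapSeq_smul_psi_smul (r : ℕ) (hv : K.e i • v = v) (h1 : 1 ≤ r := by omega)
    (h2 : r + 1 ≤ n := by omega) : K.e (swapSeq r i) • K.ψ r • v = K.ψ r • v := by
  rw [← mul_smul, ← K.psi_e r i h1 h2, mul_smul, hv]

theorem e_smul_psi_smul_of_eq (r : ℕ) (hv : K.e i • v = v) (hi : i r = i (r + 1) := by decide)
    (h1 : 1 ≤ r := by omega) (h2 : r + 1 ≤ n := by omega) : K.e i • K.ψ r • v = K.ψ r • v := by
  simpa only [swapSeq_of_eq hi] using K.e_swapSeq_smul_psi_smul r hv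

theorem y_smul_psi_smul_comm (r s : ℕ) (h1 : 1 ≤ r := by omega) (h2 : r + 1 ≤ n := by omega)
    (h3 : 1 ≤ s := by omega) (h4 : s ≤ n := by omega) (h5 : s ≠ r := by omega)
    (h6 : s ≠ r + 1 := by omega) : K.y s • K.ψ r • v = K.ψ r • K.y s • v := by
  rw [← mul_smul, K.y_psi_comm r s h1 h2 h3 h4 h5 h6, mul_smul]

theorem psi_smul_psi_smul_comm (r s : ℕ) (h1 : 1 ≤ r := by omega) (h2 : r + 1 ≤ n := by omega)
    (h3 : 1 ≤ s := by omega) (h4 : s + 1 ≤ n := by omega) (h5 : r + 1 < s := by omega) :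
    K.ψ s • K.ψ r • v = K.ψ r • K.ψ s • v := by
  rw [← mul_smul, K.psi_comm r s h1 h2 h3 h4 h5, mul_smul]

theorem y_smul_psi_smul_of_eq (r : ℕ) (hv : K.e i • v = v) (hi : i r = i (r + 1) := by decide)
    (h1 : 1 ≤ r := by omega) (h2 : r + 1 ≤ n := by omega) :
    K.y r • K.ψ r • v = K.ψ r • K.y (r + 1) • v - v := by
  rw [← mul_smul, K.smul_eq_smul_of_mul_e hv (K.y_psi_same r i h1 h2 hi), sub_smul, mul_smul,
    one_smul]

theorem y_smul_psi_smul_of_ne (r : ℕ) (hv : K.e i • v = v) (hi : i r ≠ i (r + 1) := by decide)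
    (h1 : 1 ≤ r := by omega) (h2 : r + 1 ≤ n := by omega) :
    K.y r • K.ψ r • v = K.ψ r • K.y (r + 1) • v := by
  rw [← mul_smul, K.smul_eq_smul_of_mul_e hv (K.y_psi_diff r i h1 h2 hi), mul_smul]

theorem y_succ_smul_psi_smul_of_eq (r : ℕ) (hv : K.e i • v = v)
    (hi : i r = i (r + 1) := by decide) (h1 : 1 ≤ r := by omega) (h2 : r + 1 ≤ n := by omega) :
    K.y (r + 1) • K.ψ r • v = K.ψ r • K.y r • v + v := by
  rw [← mul_smul, K.smul_eq_smul_of_mul_e hv (K.y_psi_same' r i h1 h2 hi), add_smul, mul_smul,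
    one_smul]

theorem y_succ_smul_psi_smul_of_ne (r : ℕ) (hv : K.e i • v = v)
    (hi : i r ≠ i (r + 1) := by decide) (h1 : 1 ≤ r := by omega) (h2 : r + 1 ≤ n := by omega) :
    K.y (r + 1) • K.ψ r • v = K.ψ r • K.y r • v := by
  rw [← mul_smul, K.smul_eq_smul_of_mul_e hv (K.y_psi_diff' r i h1 h2 hi), mul_smul]

theorem psi_smul_psi_smul_of_ne (r : ℕ) (hv : K.e i • v = v) (hi : i r ≠ i (r + 1) := by decide)
    (h1 : 1 ≤ r := by omega) (h2 : r + 1 ≤ n := by omega) :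
    K.ψ r • K.ψ r • v = -((K.y r - K.y (r + 1)) ^ 2 • v) := by
  rw [← mul_smul, K.smul_eq_smul_of_mul_e hv (K.psi_sq_diff r i h1 h2 hi), neg_smul]

theorem braid_smul_of_eq (r : ℕ) (hv : K.e i • v = v)
    (hi : i r = i (r + 1) ∨ i (r + 1) = i (r + 2) := by decide) (h1 : 1 ≤ r := by omega)
    (h2 : r + 2 ≤ n := by omega) :
    K.ψ r • K.ψ (r + 1) • K.ψ r • v = K.ψ (r + 1) • K.ψ r • K.ψ (r + 1) • v := by
  simp only [← mul_smul, ← mul_assoc]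
  exact K.smul_eq_smul_of_mul_e hv (K.braid_same r i h1 h2 hi)

theorem braid_smul_of_ne (r : ℕ) (hv : K.e i • v = v) (hi : i r ≠ i (r + 1) := by decide)
    (hi' : i (r + 1) ≠ i (r + 2) := by decide) (h1 : 1 ≤ r := by omega)
    (h2 : r + 2 ≤ n := by omega) :
    K.ψ r • K.ψ (r + 1) • K.ψ r • v = K.ψ (r + 1) • K.ψ r • K.ψ (r + 1) • v + K.y r • v
      - 2 • K.y (r + 1) • v + K.y (r + 2) • v := by
  simp only [← mul_smul, ← mul_assoc]
  rw [K.smul_eq_smul_of_mul_e hv (K.braid_diff r i h1 h2 hi hi'), add_smul, sub_smul, add_smul]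
  simp only [mul_smul, ofNat_smul_eq_nsmul]

theorem chainD_add_two_mul (y m : ℕ) :
    chainD K (y + 2 * m) y = chainD K (y + 2 * m) (y + 2) * PsiBig K y := by
  unfold chainD
  rw [show (y + 2 * m + 2 - y) / 2 = m + 1 by omega,
    show (y + 2 * m + 2 - (y + 2)) / 2 = m by omega, List.range_succ, List.map_append,
    List.prod_append]
  simp

theorem chainD_self (y : ℕ) : chainD K y y = PsiBig K y := by
  simp [chainD]

theorem commute_psi_psiBig {s j : ℕ} (hj : 2 ≤ j) (hs : j + 3 ≤ s) (hsn : s + 1 ≤ n) :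
    Commute (K.ψ s) (PsiBig K j) := by
  have h : ∀ t, j - 1 ≤ t → t ≤ j + 1 → Commute (K.ψ s) (K.ψ t) := fun t ht ht' =>
    K.psi_comm t s (by omega) (by omega) (by omega) hsn (by omega)
  exact (((h j (by omega) (by omega)).mul_right (h (j + 1) (by omega) le_rfl)).mul_right
    (h (j - 1) le_rfl (by omega))).mul_right (h j (by omega) (by omega))

theorem commute_psiBig_psiBig {j m : ℕ} (hj : 2 ≤ j) (hm : j + 4 ≤ m) (hmn : m + 2 ≤ n) :
    Commute (PsiBig K j) (PsiBig K m) := by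
  have h : ∀ s, m - 1 ≤ s → s ≤ m + 1 → Commute (PsiBig K j) (K.ψ s) := fun s hs hs' =>
    (K.commute_psi_psiBig hj (by omega) (by omega)).symm
  exact (((h m (by omega) (by omega)).mul_right (h (m + 1) (by omega) le_rfl)).mul_right
    (h (m - 1) le_rfl (by omega))).mul_right (h m (by omega) (by omega))

theorem commute_psiBig_chainD {j x y : ℕ} (hj : 2 ≤ j) (hy : j + 4 ≤ y) (hx : x + 2 ≤ n) :
    Commute (PsiBig K j) (chainD K x y) :=
  Commute.list_prod_right _ _ fun _ hmem => by
    obtain ⟨k, hk, rfl⟩ := List.mem_map.1 hmem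
    rw [List.mem_range] at hk
    exact K.commute_psiBig_psiBig hj (by omega) (by omega)

end KLR

section HookGenerator

variable {M : Type*} [AddCommGroup M] [Module A M]

/-- Relations of the generator `z_λ` of the Specht module `S_(a,1²)` at `e = 2`. -/
structure IsHookGenerator (K : KLR A n) (z : M) : Prop where
  y_smul : ∀ k, 1 ≤ k → k ≤ n → K.y k • z = 0
  e_smul : K.e (iLamGen 2) • z = z
  psi_smul : ∀ j, 1 ≤ j → j + 1 ≤ n → j ≠ 3 → K.ψ j • z = 0

namespace IsHookGenerator

variable {K : KLR A n} {z : M}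

theorem psi_smul_psi_three_smul (hz : IsHookGenerator K z) {j : ℕ} (hj : 5 ≤ j)
    (hjn : j + 1 ≤ n) : K.ψ j • K.ψ 3 • z = 0 := by
  rw [K.psi_smul_psi_smul_comm 3 j, hz.psi_smul j (by omega) hjn (by omega), smul_zero]

theorem y_smul_psi_three_smul (hz : IsHookGenerator K z) {k : ℕ} (hk : 1 ≤ k) (hkn : k ≤ n)
    (hn : 4 ≤ n) : K.y k • K.ψ 3 • z = 0 := by
  obtain rfl | rfl | ⟨hk3, hk4⟩ : k = 3 ∨ k = 4 ∨ (k ≠ 3 ∧ k ≠ 4) := by omega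
  · rw [K.y_smul_psi_smul_of_ne 3 hz.e_smul, hz.y_smul 4 (by omega) hn, smul_zero]
  · rw [K.y_succ_smul_psi_smul_of_ne 3 hz.e_smul, hz.y_smul 3 (by omega) (by omega), smul_zero]
  · rw [K.y_smul_psi_smul_comm 3 k, hz.y_smul k hk hkn, smul_zero]

theorem e_smul_psi_three_smul (hz : IsHookGenerator K z) (hn : 4 ≤ n) :
    K.e (swapSeq 3 (iLamGen 2)) • K.ψ 3 • z = K.ψ 3 • z :=
  K.e_swapSeq_smul_psi_smul 3 hz.e_smul

theorem e_smul_psi_two_three_smul (hz : IsHookGenerator K z) (hn : 4 ≤ n) :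
    K.e (swapSeq 3 (iLamGen 2)) • K.ψ 2 • K.ψ 3 • z = K.ψ 2 • K.ψ 3 • z :=
  K.e_smul_psi_smul_of_eq 2 (hz.e_smul_psi_three_smul hn)

theorem e_smul_psi_four_two_three_smul (hz : IsHookGenerator K z) (hn : 5 ≤ n) :
    K.e (swapSeq 3 (iLamGen 2)) • K.ψ 4 • K.ψ 2 • K.ψ 3 • z = K.ψ 4 • K.ψ 2 • K.ψ 3 • z :=
  K.e_smul_psi_smul_of_eq 4 (hz.e_smul_psi_two_three_smul (by omega))

theorem y_three_smul_psi_two_three_smul (hz : IsHookGenerator K z) (hn : 4 ≤ n) :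
    K.y 3 • K.ψ 2 • K.ψ 3 • z = K.ψ 3 • z := by
  rw [K.y_succ_smul_psi_smul_of_eq 2 (hz.e_smul_psi_three_smul hn),
    hz.y_smul_psi_three_smul (k := 2) (by omega) (by omega) hn, smul_zero, zero_add]

theorem y_smul_psi_two_three_smul (hz : IsHookGenerator K z) {k : ℕ} (hk : 4 ≤ k) (hkn : k ≤ n) :
    K.y k • K.ψ 2 • K.ψ 3 • z = 0 := by
  rw [K.y_smul_psi_smul_comm 2 k, hz.y_smul_psi_three_smul (by omega) hkn (by omega), smul_zero]

theorem y_three_smul_psi_four_two_three_smul (hz : IsHookGenerator K z) (hn : 5 ≤ n) :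
    K.y 3 • K.ψ 4 • K.ψ 2 • K.ψ 3 • z = K.ψ 4 • K.ψ 3 • z := by
  rw [K.y_smul_psi_smul_comm 4 3, hz.y_three_smul_psi_two_three_smul (by omega)]

theorem y_four_smul_psi_four_two_three_smul (hz : IsHookGenerator K z) (hn : 5 ≤ n) :
    K.y 4 • K.ψ 4 • K.ψ 2 • K.ψ 3 • z = -(K.ψ 2 • K.ψ 3 • z) := by
  rw [K.y_smul_psi_smul_of_eq 4 (hz.e_smul_psi_two_three_smul (by omega)),
    hz.y_smul_psi_two_three_smul (k := 5) (by omega) hn, smul_zero, zero_sub]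

theorem psi_three_smul_psiBig_three_smul (hz : IsHookGenerator K z) (hn : 5 ≤ n) :
    K.ψ 3 • PsiBig K 3 • z = -(2 • K.ψ 3 • z) := by
  have hdiff : (K.y 3 - K.y 4) • K.ψ 4 • K.ψ 2 • K.ψ 3 • z =
      K.ψ 4 • K.ψ 3 • z + K.ψ 2 • K.ψ 3 • z := by
    rw [sub_smul, hz.y_three_smul_psi_four_two_three_smul hn,
      hz.y_four_smul_psi_four_two_three_smul hn, sub_neg_eq_add]
  have hdiff' : (K.y 3 - K.y 4) • (K.ψ 4 • K.ψ 3 • z + K.ψ 2 • K.ψ 3 • z) = 2 • K.ψ 3 • z := by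
    rw [sub_smul, smul_add, smul_add, K.y_smul_psi_smul_comm 4 3,
      K.y_smul_psi_smul_of_eq 4 (hz.e_smul_psi_three_smul (by omega)),
      hz.y_smul_psi_three_smul (k := 3) (by omega) (by omega) (by omega),
      hz.y_smul_psi_three_smul (k := 5) (by omega) hn (by omega),
      hz.y_three_smul_psi_two_three_smul (by omega),
      hz.y_smul_psi_two_three_smul le_rfl (by omega)]
    simp only [smul_zero]
    abel
  calc K.ψ 3 • PsiBig K 3 • z = K.ψ 3 • K.ψ 3 • K.ψ 4 • K.ψ 2 • K.ψ 3 • z := by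
        simp only [PsiBig, mul_smul]
    _ = -(2 • K.ψ 3 • z) := by
        rw [K.psi_smul_psi_smul_of_ne 3 (hz.e_smul_psi_four_two_three_smul hn), sq,
          mul_smul, hdiff, hdiff']

theorem psiBig_three_smul_psiBig_three_smul (hz : IsHookGenerator K z) (hn : 5 ≤ n) :
    PsiBig K 3 • PsiBig K 3 • z = -(2 • PsiBig K 3 • z) := by
  calc PsiBig K 3 • PsiBig K 3 • z = (K.ψ 3 * K.ψ 4 * K.ψ 2) • K.ψ 3 • PsiBig K 3 • z := by
        rw [← mul_smul (K.ψ 3 * K.ψ 4 * K.ψ 2)]; rfl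
    _ = -(2 • PsiBig K 3 • z) := by
        rw [hz.psi_three_smul_psiBig_three_smul hn, smul_neg, smul_comm, ← mul_smul]; rfl

theorem psi_four_five_four_two_three_smul (hz : IsHookGenerator K z) (hn : 7 ≤ n) :
    K.ψ 4 • K.ψ 5 • K.ψ 4 • K.ψ 2 • K.ψ 3 • z = 0 := by
  rw [K.braid_smul_of_eq 4 (hz.e_smul_psi_two_three_smul (by omega)),
    K.psi_smul_psi_smul_comm 2 5, hz.psi_smul_psi_three_smul le_rfl (by omega)]
  simp only [smul_zero]

theorem psi_three_four_three_five_four_two_three_smul (hz : IsHookGenerator K z) (hn : 7 ≤ n) :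
    K.ψ 3 • K.ψ 4 • K.ψ 3 • K.ψ 5 • K.ψ 4 • K.ψ 2 • K.ψ 3 • z = K.ψ 5 • K.ψ 4 • K.ψ 3 • z := by
  have hv := K.e_swapSeq_smul_psi_smul 5 (hz.e_smul_psi_four_two_three_smul (by omega))
  rw [K.braid_smul_of_ne 3 hv, hz.psi_four_five_four_two_three_smul hn,
    K.y_smul_psi_smul_comm 5 3, hz.y_three_smul_psi_four_two_three_smul (by omega),
    K.y_smul_psi_smul_comm 5 4, hz.y_four_smul_psi_four_two_three_smul (by omega),
    K.y_smul_psi_smul_of_ne 5 (hz.e_smul_psi_four_two_three_smul (by omega)),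
    K.y_smul_psi_smul_comm 4 6, hz.y_smul_psi_two_three_smul (k := 6) (by omega) (by omega),
    smul_neg, K.psi_smul_psi_smul_comm 2 5, hz.psi_smul_psi_three_smul le_rfl (by omega)]
  simp only [smul_zero, neg_zero, sub_zero, add_zero, zero_add]

theorem psi_five_six_five_four_three_smul (hz : IsHookGenerator K z) (hn : 7 ≤ n) :
    K.ψ 5 • K.ψ 6 • K.ψ 5 • K.ψ 4 • K.ψ 3 • z = K.ψ 3 • z := by
  have hv := hz.e_smul_psi_three_smul (by omega)
  rw [K.braid_smul_of_ne 5 (K.e_smul_psi_smul_of_eq 4 hv), K.psi_smul_psi_smul_comm 4 6,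
    hz.psi_smul_psi_three_smul (j := 6) (by omega) (by omega),
    K.y_succ_smul_psi_smul_of_eq 4 hv, K.y_smul_psi_smul_comm 4 6, K.y_smul_psi_smul_comm 4 7,
    hz.y_smul_psi_three_smul (k := 4) (by omega) (by omega) (by omega),
    hz.y_smul_psi_three_smul (k := 6) (by omega) (by omega) (by omega),
    hz.y_smul_psi_three_smul (k := 7) (by omega) (by omega) (by omega)]
  simp only [smul_zero, sub_zero, add_zero, zero_add]

theorem psiBig_three_smul_psiBig_five_smul_psiBig_three_smul (hz : IsHookGenerator K z)
    (hn : 7 ≤ n) : PsiBig K 3 • PsiBig K 5 • PsiBig K 3 • z = PsiBig K 3 • z := by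
  calc PsiBig K 3 • PsiBig K 5 • PsiBig K 3 • z
      = K.ψ 3 • K.ψ 4 • K.ψ 2 • K.ψ 3 • K.ψ 5 • K.ψ 6 • K.ψ 4 • K.ψ 5 • K.ψ 3 •
          K.ψ 4 • K.ψ 2 • K.ψ 3 • z := by
        simp only [PsiBig, mul_smul]
    _ = K.ψ 3 • K.ψ 4 • K.ψ 2 • K.ψ 5 • K.ψ 6 • K.ψ 3 • K.ψ 4 • K.ψ 3 • K.ψ 5 •
          K.ψ 4 • K.ψ 2 • K.ψ 3 • z := by
        rw [K.psi_smul_psi_smul_comm 3 5 (v := K.ψ 4 • _), K.psi_smul_psi_smul_comm 3 6,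
          K.psi_smul_psi_smul_comm 3 5]
    _ = PsiBig K 3 • z := by
        rw [hz.psi_three_four_three_five_four_two_three_smul hn,
          hz.psi_five_six_five_four_three_smul hn]
        simp only [PsiBig, mul_smul]

theorem psiBig_three_smul_chainD_smul (hz : IsHookGenerator K z) {m : ℕ} (hm : 9 + 2 * m ≤ n) :
    PsiBig K 3 • chainD K (7 + 2 * m) 3 • z = 0 := by
  have hsplit : chainD K (7 + 2 * m) 3 = chainD K (7 + 2 * m) 7 * PsiBig K 5 * PsiBig K 3 := by
    have h3 := K.chainD_add_two_mul 3 (m + 2)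
    have h5 := K.chainD_add_two_mul 5 (m + 1)
    rw [show 3 + 2 * (m + 2) = 7 + 2 * m by ring] at h3
    rw [show 5 + 2 * (m + 1) = 7 + 2 * m by ring] at h5
    rw [h3, h5]
  have hcomm : Commute (PsiBig K 3) (chainD K (7 + 2 * m) 7) :=
    K.commute_psiBig_chainD (by norm_num) le_rfl (by omega)
  have hvanish : chainD K (7 + 2 * m) 7 • z = 0 := by
    rw [K.chainD_add_two_mul 7 m, mul_smul, PsiBig, mul_smul, hz.psi_smul 7 (by omega) (by omega)
      (by omega), smul_zero, smul_zero]
  calc PsiBig K 3 • chainD K (7 + 2 * m) 3 • z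
      = chainD K (7 + 2 * m) 7 • PsiBig K 3 • PsiBig K 5 • PsiBig K 3 • z := by
        rw [hsplit, mul_smul, mul_smul, ← mul_smul (PsiBig K 3), hcomm.eq, mul_smul]
    _ = PsiBig K 3 • chainD K (7 + 2 * m) 7 • z := by
        rw [hz.psiBig_three_smul_psiBig_five_smul_psiBig_three_smul (by omega), ← mul_smul,
          ← hcomm.eq, mul_smul]
    _ = 0 := by rw [hvanish, smul_zero]

theorem psiBig_three_smul_sum {F : Type*} [CommRing F] [Algebra F A] [Module F M]
    [IsScalarTower F A M] (hz : IsHookGenerator K z) {r : ℕ} (hr : 1 ≤ r) (hn : n = 2 * r + 3) :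
    PsiBig K 3 • ∑ c ∈ Finset.Icc 1 r, (c : F) • chainD K (3 + 2 * (r - c)) 3 • z =
      -((r + 1 : ℕ) : F) • PsiBig K 3 • z := by
  simp_rw [Finset.smul_sum, smul_comm (PsiBig K 3) (_ : F)]
  obtain rfl | ⟨t, rfl⟩ : r = 1 ∨ ∃ t, r = t + 2 := by
    rcases Nat.lt_or_ge r 2 with h | h
    exacts [Or.inl (by omega), Or.inr ⟨r - 2, by omega⟩]
  · simp [K.chainD_self, hz.psiBig_three_smul_psiBig_three_smul (by omega), two_smul]
  · rw [Finset.sum_Icc_succ_top (by omega), Finset.sum_Icc_succ_top (by omega),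
      Finset.sum_eq_zero fun c hc => ?_]
    · rw [show 3 + 2 * (t + 2 - (t + 1)) = 3 + 2 * 1 by omega, K.chainD_add_two_mul 3 1,
        K.chainD_self, mul_smul, show 3 + 2 * (t + 2 - (t + 1 + 1)) = 3 by omega, K.chainD_self,
        hz.psiBig_three_smul_psiBig_five_smul_psiBig_three_smul (by omega),
        hz.psiBig_three_smul_psiBig_three_smul (by omega)]
      generalize PsiBig K 3 • z = w
      push_cast
      module
    · obtain ⟨hc1, hct⟩ := Finset.mem_Icc.1 hc
      rw [show 3 + 2 * (t + 2 - c) = 7 + 2 * (t - c) by omega,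
        hz.psiBig_three_smul_chainD_smul (by omega), smul_zero]

end IsHookGenerator

end HookGenerator

theorem specht_hook_leg_two_f_squared_general {F M : Type*} [Field F] [Algebra F A]
    [AddCommGroup M] [Module A M] [Module F M] [IsScalarTower F A M]
    (r a : ℕ) (ha : a = 2 * r + 1) (hn : n = a + 2)
    (K : KLR A n) (z : M)
    (hy : ∀ k, 1 ≤ k → k ≤ n → K.y k • z = 0)
    (he1 : K.e (iLamGen 2) • z = z)
    (hpsiz : ∀ j, 1 ≤ j → j + 1 ≤ n → j ≠ 3 → K.ψ j • z = 0)
    (hgen : Submodule.span A {z} = ⊤)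
    (f : M →ₗ[A] M)
    (hf : f z = ∑ c ∈ Finset.Icc 1 r, ((c : ℕ) : F) • (chainD K (3 + 2 * (r - c)) 3 • z)) :
    ∀ m : M, f (f m) = -(((r + 1 : ℕ) : F)) • f m := by
  have hz : IsHookGenerator K z := ⟨hy, he1, hpsiz⟩
  have hfz : f (f z) = -(((r + 1 : ℕ) : F)) • f z := by
    conv_lhs => rw [hf]
    rw [map_sum, hf, Finset.smul_sum]
    refine Finset.sum_congr rfl fun c hc => ?_
    have hr : 1 ≤ r := (Finset.mem_Icc.1 hc).1.trans (Finset.mem_Icc.1 hc).2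
    rw [f.map_smul_of_tower, K.chainD_add_two_mul 3 (r - c), mul_smul, f.map_smul, f.map_smul, hf,
      hz.psiBig_three_smul_sum hr (by omega), smul_comm _ (-_ : F), smul_comm (c : F)]
  have hcomp : f ∘ₗ f = -(((r + 1 : ℕ) : F)) • f :=
    LinearMap.ext_on hgen (by simpa using hfz)
  exact fun m => LinearMap.congr_fun hcomp m

/-- Lemma `f2`: `e = 2`, `a = 2r + 1`, `b = 2`, `λ = (a, 1²)`, and
`f ∈ End(S_λ)` given by `f(z) = Σ_{c=1}^{r} c · Ψ↓(3 + 2(r-c), 3) z`.  Then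
`f² = -(r + 1) f`. -/
theorem specht_hook_leg_two_f_squared {F M : Type*} [Field F] [Algebra F A]
    [AddCommGroup M] [Module A M] [Module F M] [IsScalarTower F A M]
    (r a : ℕ) (ha : a = 2 * r + 1) (hn : n = a + 2)
    (K : KLR A n) (z : M)
    (hy : ∀ k, 1 ≤ k → k ≤ n → K.y k • z = 0)
    (he1 : K.e (iLamGen 2) • z = z)
    (he2 : ∀ i, i ≠ iLamGen 2 → K.e i • z = 0)
    (hpsiz : ∀ j, 1 ≤ j → j + 1 ≤ n → j ≠ 3 → K.ψ j • z = 0)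
    (hgar : ascWord K 1 3 • z = 0)
    (hgen : Submodule.span A {z} = ⊤)
    (f : M →ₗ[A] M)
    (hf : f z = ∑ c ∈ Finset.Icc 1 r, ((c : ℕ) : F) • (chainD K (3 + 2 * (r - c)) 3 • z)) :
    ∀ m : M, f (f m) = -(((r + 1 : ℕ) : F)) • f m :=
  specht_hook_leg_two_f_squared_general r a ha hn K z hy he1 hpsiz hgen f hf
end
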